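/- arXiv:1611.04805 — 4 statements merged into one kernel-verified Lean document; each statement's English description precedes it below -/
import Mathlib

section
/- Let d ≥ 3. For every function ψ ∈ C_c^∞(ℝ^d \ {0}, ℂ), the Hardy inequality holds: ((d-2)²/4) · ∫_{ℝ^d} |ψ(x)|²/|x|² dx ≤ ∫_{ℝ^d} |∇ψ(x)|² dx. -/
open MeasureTheory Filter Function Set Manifold Topology

lemma hardy_aux_cnormsq (z : ℂ) : ‖z‖ ^ 2 = z.re * z.re + z.im * z.im := by
  rw [Complex.sq_norm, Complex.normSq_apply]

lemma hardy_aux_normsq {d : ℕ} (x : EuclideanSpace ℝ (Fin d)) :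
    ‖x‖ ^ 2 = ∑ j, x j * x j := by
  rw [EuclideanSpace.norm_eq, Real.sq_sqrt (by positivity)]
  refine Finset.sum_congr rfl fun j _ => ?_
  rw [Real.norm_eq_abs, sq_abs, sq]

lemma hardy_aux_Nne {d : ℕ} {x : EuclideanSpace ℝ (Fin d)} (hx : x ≠ 0) :
    (∑ j, x j * x j) ≠ 0 := by
  rw [← hardy_aux_normsq]
  exact pow_ne_zero 2 (norm_ne_zero_iff.mpr hx)

lemma hardy_aux_hasFDerivAt_N {d : ℕ} (x : EuclideanSpace ℝ (Fin d)) :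
    HasFDerivAt (fun y : EuclideanSpace ℝ (Fin d) => ∑ j, y j * y j)
      (∑ j, (x j • (EuclideanSpace.proj j : EuclideanSpace ℝ (Fin d) →L[ℝ] ℝ)
           + x j • (EuclideanSpace.proj j : EuclideanSpace ℝ (Fin d) →L[ℝ] ℝ))) x :=
  by
  have hproj : ∀ j : Fin d, HasFDerivAt (fun y : EuclideanSpace ℝ (Fin d) => y j)
      (EuclideanSpace.proj j : EuclideanSpace ℝ (Fin d) →L[ℝ] ℝ) x :=
    fun j => (EuclideanSpace.proj j : EuclideanSpace ℝ (Fin d) →L[ℝ] ℝ).hasFDerivAt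
  exact HasFDerivAt.fun_sum fun j _ => (hproj j).mul (hproj j)

lemma hardy_aux_hasFDerivAt_g {d : ℕ} (k : Fin d) {x : EuclideanSpace ℝ (Fin d)} (hx : x ≠ 0) :
    HasFDerivAt (fun y : EuclideanSpace ℝ (Fin d) => y k * (∑ j, y j * y j)⁻¹)
      (x k • ((-((∑ j, x j * x j) ^ 2)⁻¹) •
          (∑ j, (x j • (EuclideanSpace.proj j : EuclideanSpace ℝ (Fin d) →L[ℝ] ℝ)
             + x j • (EuclideanSpace.proj j : EuclideanSpace ℝ (Fin d) →L[ℝ] ℝ))))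
        + (∑ j, x j * x j)⁻¹ • (EuclideanSpace.proj k : EuclideanSpace ℝ (Fin d) →L[ℝ] ℝ)) x := by
  have hN := hardy_aux_hasFDerivAt_N x
  have hinv := (hasDerivAt_inv (hardy_aux_Nne hx)).comp_hasFDerivAt x hN
  have hproj : HasFDerivAt (fun y : EuclideanSpace ℝ (Fin d) => y k)
      (EuclideanSpace.proj k : EuclideanSpace ℝ (Fin d) →L[ℝ] ℝ) x :=
    (EuclideanSpace.proj k : EuclideanSpace ℝ (Fin d) →L[ℝ] ℝ).hasFDerivAt
  exact hproj.mul hinv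

lemma hardy_aux_div {d : ℕ} {x : EuclideanSpace ℝ (Fin d)} (hx : x ≠ 0) :
    ∑ k, fderiv ℝ (fun y : EuclideanSpace ℝ (Fin d) => y k * (∑ j, y j * y j)⁻¹) x
        (EuclideanSpace.single k 1)
      = ((d : ℝ) - 2) * (∑ j, x j * x j)⁻¹ := by
  have hNe := hardy_aux_Nne hx
  have hev : ∀ k : Fin d,
      fderiv ℝ (fun y : EuclideanSpace ℝ (Fin d) => y k * (∑ j, y j * y j)⁻¹) x
        (EuclideanSpace.single k 1)
      = (∑ j, x j * x j)⁻¹ - x k * ((∑ j, x j * x j) ^ 2)⁻¹ * (2 * x k) := by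
    intro k
    have hLN : (∑ j, (x j • (EuclideanSpace.proj j : EuclideanSpace ℝ (Fin d) →L[ℝ] ℝ)
        + x j • (EuclideanSpace.proj j : EuclideanSpace ℝ (Fin d) →L[ℝ] ℝ)))
        (EuclideanSpace.single k 1) = 2 * x k := by
      simp only [ContinuousLinearMap.sum_apply, ContinuousLinearMap.add_apply,
        ContinuousLinearMap.smul_apply, PiLp.proj_apply, smul_eq_mul,
        EuclideanSpace.single_apply, mul_ite, mul_one, mul_zero]
      simp [Finset.sum_add_distrib, Finset.sum_ite_eq', two_mul]
    rw [(hardy_aux_hasFDerivAt_g k hx).fderiv, ContinuousLinearMap.add_apply,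
      ContinuousLinearMap.smul_apply, ContinuousLinearMap.smul_apply, hLN,
      ContinuousLinearMap.smul_apply, PiLp.proj_apply, EuclideanSpace.single_apply,
      if_pos rfl]
    simp only [smul_eq_mul]
    ring
  rw [Finset.sum_congr rfl fun k _ => hev k, Finset.sum_sub_distrib, Finset.sum_const,
    Finset.card_univ, Fintype.card_fin, nsmul_eq_mul]
  have hsum : ∑ k, x k * ((∑ j, x j * x j) ^ 2)⁻¹ * (2 * x k)
      = ((∑ j, x j * x j) ^ 2)⁻¹ * 2 * (∑ j, x j * x j) := by
    rw [Finset.mul_sum]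
    refine Finset.sum_congr rfl fun k _ => by ring
  rw [hsum]
  field_simp

lemma hardy_aux_hasFDerivAt_u {d : ℕ} {ψ : EuclideanSpace ℝ (Fin d) → ℂ}
    (hψ : Differentiable ℝ ψ) (x : EuclideanSpace ℝ (Fin d)) :
    HasFDerivAt (fun y => ‖ψ y‖ ^ 2)
      ((((ψ x).re • (Complex.reCLM.comp (fderiv ℝ ψ x))
          + (ψ x).re • (Complex.reCLM.comp (fderiv ℝ ψ x)))
        + ((ψ x).im • (Complex.imCLM.comp (fderiv ℝ ψ x))
          + (ψ x).im • (Complex.imCLM.comp (fderiv ℝ ψ x))))) x := by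
  have hd := (hψ x).hasFDerivAt
  have hp : HasFDerivAt (fun y => (ψ y).re) (Complex.reCLM.comp (fderiv ℝ ψ x)) x :=
    (Complex.reCLM.hasFDerivAt).comp x hd
  have hq : HasFDerivAt (fun y => (ψ y).im) (Complex.imCLM.comp (fderiv ℝ ψ x)) x :=
    (Complex.imCLM.hasFDerivAt).comp x hd
  have h := (hp.mul hp).add (hq.mul hq)
  exact h.congr_of_eventuallyEq (Filter.Eventually.of_forall fun y => hardy_aux_cnormsq (ψ y))

lemma hardy_aux_fderiv_u {d : ℕ} {ψ : EuclideanSpace ℝ (Fin d) → ℂ}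
    (hψ : Differentiable ℝ ψ) (x v : EuclideanSpace ℝ (Fin d)) :
    fderiv ℝ (fun y => ‖ψ y‖ ^ 2) x v
      = 2 * ((ψ x).re * (fderiv ℝ ψ x v).re + (ψ x).im * (fderiv ℝ ψ x v).im) := by
  rw [(hardy_aux_hasFDerivAt_u hψ x).fderiv]
  simp only [ContinuousLinearMap.add_apply, ContinuousLinearMap.smul_apply,
    ContinuousLinearMap.comp_apply, Complex.reCLM_apply, Complex.imCLM_apply, smul_eq_mul]
  ring

/-- **Hardy's inequality.** For `d ≥ 3` and every `ψ ∈ C_c^∞(ℝ^d \ {0}, ℂ)`,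
`((d-2)²/4) ∫ |ψ(x)|²/|x|² dx ≤ ∫ |∇ψ(x)|² dx`, where
`|∇ψ(x)|² = Σ_k |∂_k ψ(x)|²`. -/
theorem hardy_inequality (d : ℕ) (hd : 3 ≤ d)
    (ψ : EuclideanSpace ℝ (Fin d) → ℂ)
    (hψ_smooth : ContDiff ℝ (⊤ : ℕ∞) ψ)
    (hψ_supp : HasCompactSupport ψ)
    (hψ_zero : (0 : EuclideanSpace ℝ (Fin d)) ∉ tsupport ψ) :
    ((d : ℝ) - 2) ^ 2 / 4 * ∫ x : EuclideanSpace ℝ (Fin d), ‖ψ x‖ ^ 2 / ‖x‖ ^ 2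
      ≤ ∫ x : EuclideanSpace ℝ (Fin d),
          ∑ k : Fin d, ‖fderiv ℝ ψ x (EuclideanSpace.single k 1)‖ ^ 2 := by
  classical
  have h1top : ((⊤ : ℕ∞) : WithTop ℕ∞) ≠ 0 := by simp
  have hψ_diff : Differentiable ℝ ψ := hψ_smooth.differentiable (by simp)
  have hψ_inf : ContDiff ℝ ((⊤ : ℕ∞) : WithTop ℕ∞) ψ := hψ_smooth.of_le (by simp)
  have hu_smooth : ContDiff ℝ ((⊤ : ℕ∞) : WithTop ℕ∞)
      (fun x : EuclideanSpace ℝ (Fin d) => ‖ψ x‖ ^ 2) :=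
    ContDiff.norm_sq (𝕜 := ℝ) hψ_inf
  have hu_supp : HasCompactSupport (fun x : EuclideanSpace ℝ (Fin d) => ‖ψ x‖ ^ 2) :=
    hψ_supp.comp_left (g := fun z : ℂ => ‖z‖ ^ 2) (by simp)
  have hu_cont : Continuous (fun x : EuclideanSpace ℝ (Fin d) => ‖ψ x‖ ^ 2) :=
    hu_smooth.continuous
  have hu_diff : Differentiable ℝ (fun x : EuclideanSpace ℝ (Fin d) => ‖ψ x‖ ^ 2) :=
    fun x => (hardy_aux_hasFDerivAt_u hψ_diff x).differentiableAt
  -- the cutoff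
  obtain ⟨r, hr0, hball⟩ := Metric.isOpen_iff.mp
    (isOpen_compl_iff.mpr (isClosed_tsupport ψ)) 0 hψ_zero
  obtain ⟨R, hR⟩ := hψ_supp.isBounded.subset_closedBall 0
  set t : Set (EuclideanSpace ℝ (Fin d)) :=
    {x | r / 2 ≤ ‖x‖} ∩ Metric.closedBall 0 (R + 1) with ht_def
  have ht_closed : IsClosed t :=
    (isClosed_le continuous_const continuous_norm).inter Metric.isClosed_closedBall
  have ht_compact : IsCompact t :=
    (isCompact_closedBall (0 : EuclideanSpace ℝ (Fin d)) (R + 1)).of_isClosed_subset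
      ht_closed Set.inter_subset_right
  have ht0 : (0 : EuclideanSpace ℝ (Fin d)) ∉ t := by
    intro h
    have := h.1
    simp only [Set.mem_setOf_eq, norm_zero] at this
    linarith
  have htsub : tsupport ψ ⊆ interior t := by
    have hopen : IsOpen ({y : EuclideanSpace ℝ (Fin d) | r / 2 < ‖y‖} ∩ Metric.ball 0 (R + 1)) :=
      (isOpen_lt continuous_const continuous_norm).inter Metric.isOpen_ball
    have hsub2 : ({y : EuclideanSpace ℝ (Fin d) | r / 2 < ‖y‖} ∩ Metric.ball 0 (R + 1)) ⊆ t :=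
      fun y hy => ⟨show r / 2 ≤ ‖y‖ from le_of_lt hy.1, Metric.ball_subset_closedBall hy.2⟩
    intro x hx
    have hx1 : r ≤ ‖x‖ := by
      by_contra h
      push_neg at h
      exact (hball (by simpa [Metric.mem_ball, dist_zero_right] using h)) hx
    have hx2 : ‖x‖ ≤ R := by
      simpa [Metric.mem_closedBall, dist_zero_right] using hR hx
    exact interior_maximal hsub2 hopen ⟨by simp only [Set.mem_setOf_eq]; linarith,
      by simp only [Metric.mem_ball, dist_zero_right]; linarith⟩
  obtain ⟨χ₀, hχ1, hχ0, hχ01⟩ :=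
    exists_contMDiffMap_one_nhds_of_subset_interior (𝓘(ℝ, EuclideanSpace ℝ (Fin d))) (n := (⊤ : ℕ∞))
      (isClosed_tsupport ψ) htsub
  set χ : EuclideanSpace ℝ (Fin d) → ℝ := ⇑χ₀ with hχ_def
  have hχ_smooth : ContDiff ℝ ((⊤ : ℕ∞) : WithTop ℕ∞) χ :=
    contMDiff_iff_contDiff.mp χ₀.contMDiff
  obtain ⟨V, hVopen, hVsub, hV1⟩ := eventually_nhdsSet_iff_exists.mp hχ1
  have hχ_supp : HasCompactSupport χ := HasCompactSupport.intro ht_compact hχ0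
  have hsupp_t : support χ ⊆ t := support_subset_iff'.mpr hχ0
  have hVne : ∀ x ∈ V, x ≠ (0 : EuclideanSpace ℝ (Fin d)) := by
    intro x hxV hx0
    have h1 : χ x = 1 := hV1 x hxV
    have hxs : x ∈ support χ := by rw [mem_support, h1]; exact one_ne_zero
    rw [hx0] at hxs
    exact ht0 (hsupp_t hxs)
  set G : Fin d → EuclideanSpace ℝ (Fin d) → ℝ :=
    fun k x => χ x * (x k * (∑ j, x j * x j)⁻¹) with hG_def
  have hχ_near0 : χ =ᶠ[𝓝 (0 : EuclideanSpace ℝ (Fin d))] 0 := by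
    apply notMem_tsupport_iff_eventuallyEq.mp
    intro h0
    exact ht0 ((ht_closed.closure_subset_iff.mpr hsupp_t) h0)
  have hN_smooth : ContDiff ℝ ((⊤ : ℕ∞) : WithTop ℕ∞)
      (fun y : EuclideanSpace ℝ (Fin d) => ∑ j, y j * y j) := by
    have hproj : ∀ j : Fin d, ContDiff ℝ ((⊤ : ℕ∞) : WithTop ℕ∞)
        (fun y : EuclideanSpace ℝ (Fin d) => y j) :=
      fun j => (EuclideanSpace.proj j : EuclideanSpace ℝ (Fin d) →L[ℝ] ℝ).contDiff
    exact ContDiff.sum fun j _ => (hproj j).mul (hproj j)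
  have hG_smooth : ∀ k, ContDiff ℝ ((⊤ : ℕ∞) : WithTop ℕ∞) (G k) := by
    intro k
    rw [contDiff_iff_contDiffAt]
    intro x
    by_cases hx : x = 0
    · subst hx
      have hG0 : G k =ᶠ[𝓝 (0 : EuclideanSpace ℝ (Fin d))] 0 := by
        filter_upwards [hχ_near0] with y hy
        simp [hG_def, hy]
      exact (contDiffAt_const (c := (0 : ℝ))).congr_of_eventuallyEq hG0
    · have hprojk : ContDiff ℝ ((⊤ : ℕ∞) : WithTop ℕ∞)
          (fun y : EuclideanSpace ℝ (Fin d) => y k) :=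
        (EuclideanSpace.proj k : EuclideanSpace ℝ (Fin d) →L[ℝ] ℝ).contDiff
      exact (hχ_smooth.contDiffAt).mul
        ((hprojk.contDiffAt).mul ((hN_smooth.contDiffAt).inv (hardy_aux_Nne hx)))
  have hG_cont : ∀ k, Continuous (G k) := fun k => (hG_smooth k).continuous
  have hG_supp : ∀ k, HasCompactSupport (G k) := fun k => hχ_supp.mul_right
  -- Lipschitz properties
  obtain ⟨Cu, hCu⟩ := ContDiff.lipschitzWith_of_hasCompactSupport hu_supp hu_smooth h1top
  -- integration by parts
  have hIBP : ∀ k : Fin d,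
      ∫ x, fderiv ℝ (fun y => ‖ψ y‖ ^ 2) x (EuclideanSpace.single k 1) * G k x
      = ∫ x, (-(fderiv ℝ (G k) x (EuclideanSpace.single k 1))) * ‖ψ x‖ ^ 2 := by
    intro k
    obtain ⟨CG, hCG⟩ :=
      ContDiff.lipschitzWith_of_hasCompactSupport (hG_supp k) (hG_smooth k) h1top
    have h := LipschitzWith.integral_lineDeriv_mul_eq (μ := volume) hCu hCG (hG_supp k)
      (EuclideanSpace.single k 1)
    have h1 : (fun x => lineDeriv ℝ (fun y => ‖ψ y‖ ^ 2) x (EuclideanSpace.single k 1) * G k x)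
        = fun x => fderiv ℝ (fun y => ‖ψ y‖ ^ 2) x (EuclideanSpace.single k 1) * G k x :=
      funext fun x => by rw [(hu_diff x).lineDeriv_eq_fderiv]
    have h2 : (fun x => lineDeriv ℝ (G k) x (-(EuclideanSpace.single k 1)) * ‖ψ x‖ ^ 2)
        = fun x => (-(fderiv ℝ (G k) x (EuclideanSpace.single k 1))) * ‖ψ x‖ ^ 2 :=
      funext fun x => by
        rw [((hG_smooth k).differentiable h1top x).lineDeriv_eq_fderiv, map_neg]
    rw [h1, h2] at h
    exact h
  -- pointwise divergence identity
  have hdivpt : ∀ x : EuclideanSpace ℝ (Fin d),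
      (∑ k, -(fderiv ℝ (G k) x (EuclideanSpace.single k 1))) * ‖ψ x‖ ^ 2
      = (-((d : ℝ) - 2)) * (‖ψ x‖ ^ 2 / ‖x‖ ^ 2) := by
    intro x
    by_cases hxV : x ∈ V
    · have hx0 : x ≠ 0 := hVne x hxV
      have hfd : ∀ k : Fin d, fderiv ℝ (G k) x
          = fderiv ℝ (fun y : EuclideanSpace ℝ (Fin d) => y k * (∑ j, y j * y j)⁻¹) x := by
        intro k
        apply Filter.EventuallyEq.fderiv_eq
        filter_upwards [hVopen.mem_nhds hxV] with y hy
        simp [hG_def, hV1 y hy]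
      have hsum : ∑ k, -(fderiv ℝ (G k) x (EuclideanSpace.single k 1))
          = -(((d : ℝ) - 2) * (∑ j, x j * x j)⁻¹) := by
        simp only [hfd]
        rw [Finset.sum_neg_distrib, hardy_aux_div hx0]
      rw [hsum, hardy_aux_normsq x, div_eq_mul_inv]
      ring
    · have hψx : ψ x = 0 := image_eq_zero_of_notMem_tsupport (fun hmem => hxV (hVsub hmem))
      simp [hψx]
  -- pointwise identity for the weight
  have hSpt : ∀ x : EuclideanSpace ℝ (Fin d),
      ‖ψ x‖ ^ 2 / ‖x‖ ^ 2 = ‖ψ x‖ ^ 2 * ∑ k, (G k x) ^ 2 := by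
    intro x
    by_cases hxV : x ∈ V
    · have hx0 : x ≠ 0 := hVne x hxV
      have hNe := hardy_aux_Nne hx0
      have hGx : ∀ k : Fin d, G k x = x k * (∑ j, x j * x j)⁻¹ :=
        fun k => by simp [hG_def, hV1 x hxV]
      have hS : ∑ k, (G k x) ^ 2 = (∑ j, x j * x j)⁻¹ := by
        calc ∑ k, (G k x) ^ 2
            = ∑ k, (x k * x k) * ((∑ j, x j * x j)⁻¹ * (∑ j, x j * x j)⁻¹) :=
              Finset.sum_congr rfl fun k _ => by rw [hGx k]; ring
          _ = (∑ j, x j * x j) * ((∑ j, x j * x j)⁻¹ * (∑ j, x j * x j)⁻¹) := by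
              rw [← Finset.sum_mul]
          _ = (∑ j, x j * x j)⁻¹ := by field_simp
      rw [hS, hardy_aux_normsq x, div_eq_mul_inv]
    · have hψx : ψ x = 0 := image_eq_zero_of_notMem_tsupport (fun hmem => hxV (hVsub hmem))
      simp [hψx]
  -- integrability
  have hfψc : Continuous (fderiv ℝ ψ) := hψ_smooth.continuous_fderiv (by simp)
  have hufc : Continuous (fderiv ℝ (fun y : EuclideanSpace ℝ (Fin d) => ‖ψ y‖ ^ 2)) :=
    hu_smooth.continuous_fderiv h1top
  have hInt1 : Integrable
      (fun x : EuclideanSpace ℝ (Fin d) =>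
        ∑ k : Fin d, ‖fderiv ℝ ψ x (EuclideanSpace.single k 1)‖ ^ 2) := by
    apply Continuous.integrable_of_hasCompactSupport
    · exact continuous_finset_sum _ fun k _ => ((hfψc.clm_apply continuous_const).norm.pow 2)
    · exact HasCompactSupport.comp_left
        (g := fun L : EuclideanSpace ℝ (Fin d) →L[ℝ] ℂ =>
          ∑ k : Fin d, ‖L (EuclideanSpace.single k 1)‖ ^ 2)
        (hψ_supp.fderiv (𝕜 := ℝ)) (by simp)
  have hIntD : ∀ k : Fin d, Integrable
      (fun x => fderiv ℝ (fun y => ‖ψ y‖ ^ 2) x (EuclideanSpace.single k 1) * G k x) := by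
    intro k
    apply Continuous.integrable_of_hasCompactSupport
    · exact (hufc.clm_apply continuous_const).mul (hG_cont k)
    · exact (hG_supp k).mul_left
  have hIntD' : ∀ k : Fin d, Integrable
      (fun x => (-(fderiv ℝ (G k) x (EuclideanSpace.single k 1))) * ‖ψ x‖ ^ 2) := by
    intro k
    apply Continuous.integrable_of_hasCompactSupport
    · exact (((((hG_smooth k).continuous_fderiv h1top).clm_apply continuous_const)).neg).mul
        hu_cont
    · exact hu_supp.mul_left
  have hInt2 : Integrable
      (fun x : EuclideanSpace ℝ (Fin d) => ‖ψ x‖ ^ 2 * ∑ k, (G k x) ^ 2) := by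
    apply Continuous.integrable_of_hasCompactSupport
    · exact hu_cont.mul (continuous_finset_sum _ fun k _ => ((hG_cont k).pow 2))
    · exact hu_supp.mul_right
  -- the quadratic expression
  set c : ℝ := ((d : ℝ) - 2) / 2 with hc
  set Q : EuclideanSpace ℝ (Fin d) → ℝ := fun x =>
    ∑ k : Fin d,
      (((fderiv ℝ ψ x (EuclideanSpace.single k 1)).re + c * G k x * (ψ x).re) ^ 2
        + ((fderiv ℝ ψ x (EuclideanSpace.single k 1)).im + c * G k x * (ψ x).im) ^ 2)
    with hQdef
  have hQ0 : 0 ≤ ∫ x, Q x :=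
    integral_nonneg fun x => Finset.sum_nonneg fun k _ => by positivity
  have hpt : ∀ x : EuclideanSpace ℝ (Fin d), Q x
      = (∑ k : Fin d, ‖fderiv ℝ ψ x (EuclideanSpace.single k 1)‖ ^ 2)
        + c ^ 2 * (‖ψ x‖ ^ 2 * ∑ k, (G k x) ^ 2)
        + c * (∑ k, fderiv ℝ (fun y => ‖ψ y‖ ^ 2) x (EuclideanSpace.single k 1) * G k x) := by
    intro x
    have hterm : ∀ k : Fin d,
        ((fderiv ℝ ψ x (EuclideanSpace.single k 1)).re + c * G k x * (ψ x).re) ^ 2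
          + ((fderiv ℝ ψ x (EuclideanSpace.single k 1)).im + c * G k x * (ψ x).im) ^ 2
        = ‖fderiv ℝ ψ x (EuclideanSpace.single k 1)‖ ^ 2
          + c ^ 2 * (‖ψ x‖ ^ 2 * (G k x) ^ 2)
          + c * (fderiv ℝ (fun y => ‖ψ y‖ ^ 2) x (EuclideanSpace.single k 1) * G k x) := by
      intro k
      rw [hardy_aux_fderiv_u hψ_diff x (EuclideanSpace.single k 1),
        hardy_aux_cnormsq (fderiv ℝ ψ x (EuclideanSpace.single k 1)),
        hardy_aux_cnormsq (ψ x)]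
      ring
    simp only [hQdef]
    rw [Finset.sum_congr rfl fun k _ => hterm k, Finset.sum_add_distrib,
      Finset.sum_add_distrib, ← Finset.mul_sum, ← Finset.mul_sum, ← Finset.mul_sum]
  have hsplit : ∫ x, Q x
      = (∫ x, ∑ k : Fin d, ‖fderiv ℝ ψ x (EuclideanSpace.single k 1)‖ ^ 2)
        + c ^ 2 * (∫ x, ‖ψ x‖ ^ 2 * ∑ k, (G k x) ^ 2)
        + c * (∫ x, ∑ k, fderiv ℝ (fun y => ‖ψ y‖ ^ 2) x (EuclideanSpace.single k 1) * G k x)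
      := by
    have hQeq : Q = fun x =>
        (∑ k : Fin d, ‖fderiv ℝ ψ x (EuclideanSpace.single k 1)‖ ^ 2)
        + (c ^ 2 * (‖ψ x‖ ^ 2 * ∑ k, (G k x) ^ 2)
          + c * (∑ k, fderiv ℝ (fun y => ‖ψ y‖ ^ 2) x (EuclideanSpace.single k 1) * G k x)) :=
      funext fun x => by rw [hpt x]; ring
    have hA2 : Integrable (fun x : EuclideanSpace ℝ (Fin d) =>
        c ^ 2 * (‖ψ x‖ ^ 2 * ∑ k, (G k x) ^ 2)) volume := hInt2.const_mul _
    have hA3 : Integrable (fun x : EuclideanSpace ℝ (Fin d) =>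
        c * (∑ k, fderiv ℝ (fun y => ‖ψ y‖ ^ 2) x (EuclideanSpace.single k 1) * G k x)) volume :=
      (integrable_finset_sum _ fun k _ => hIntD k).const_mul _
    have hA23 : Integrable (fun x : EuclideanSpace ℝ (Fin d) =>
        c ^ 2 * (‖ψ x‖ ^ 2 * ∑ k, (G k x) ^ 2)
          + c * (∑ k, fderiv ℝ (fun y => ‖ψ y‖ ^ 2) x (EuclideanSpace.single k 1) * G k x))
        volume := hA2.add hA3
    rw [hQeq, integral_add hInt1 hA23, integral_add hA2 hA3,
      integral_const_mul, integral_const_mul]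
    ring
  have hDD : ∫ x, ∑ k, fderiv ℝ (fun y => ‖ψ y‖ ^ 2) x (EuclideanSpace.single k 1) * G k x
      = (-((d : ℝ) - 2)) * ∫ x, ‖ψ x‖ ^ 2 / ‖x‖ ^ 2 := by
    rw [integral_finset_sum _ fun k _ => hIntD k,
      Finset.sum_congr rfl fun k _ => hIBP k,
      ← integral_finset_sum _ fun k _ => hIntD' k]
    have heq : (fun x => ∑ k, (-(fderiv ℝ (G k) x (EuclideanSpace.single k 1))) * ‖ψ x‖ ^ 2)
        = fun x => (-((d : ℝ) - 2)) * (‖ψ x‖ ^ 2 / ‖x‖ ^ 2) := funext fun x => by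
      rw [← Finset.sum_mul]; exact hdivpt x
    rw [heq, integral_const_mul]
  have hJJ : ∫ x, ‖ψ x‖ ^ 2 * ∑ k, (G k x) ^ 2
      = ∫ x : EuclideanSpace ℝ (Fin d), ‖ψ x‖ ^ 2 / ‖x‖ ^ 2 := by
    have heq : (fun x : EuclideanSpace ℝ (Fin d) => ‖ψ x‖ ^ 2 * ∑ k, (G k x) ^ 2)
        = fun x => ‖ψ x‖ ^ 2 / ‖x‖ ^ 2 := funext fun x => (hSpt x).symm
    rw [heq]
  have hfinal : ∫ x, Q x
      = (∫ x : EuclideanSpace ℝ (Fin d),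
            ∑ k : Fin d, ‖fderiv ℝ ψ x (EuclideanSpace.single k 1)‖ ^ 2)
        - ((d : ℝ) - 2) ^ 2 / 4 * ∫ x : EuclideanSpace ℝ (Fin d), ‖ψ x‖ ^ 2 / ‖x‖ ^ 2 := by
    rw [hsplit, hJJ, hDD, hc]
    ring
  linarith [hQ0, hfinal]
end

section
/- Let d ≥ 3. For every ψ ∈ C_c^∞(ℝ^d \ {0}, ℂ), the radial Hardy inequality holds: ((d-2)²/4) · ∫_{ℝ^d} |ψ(x)|²/|x|² dx ≤ ∫_{ℝ^d} |∂_r ψ(x)|² dx, where ∂_r ψ(x) := (x/|x|) · ∇ψ(x) is the radial derivative. -/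
open MeasureTheory Topology Filter

section Aux

variable {d : ℕ}

local notation "𝔼" => EuclideanSpace ℝ (Fin d)

/-- Integrability helper: a function vanishing near `0`, continuous away from `0`, with
support inside a compact set, is integrable. -/
lemma hardy_integrable_aux {g : 𝔼 → ℝ} {K : Set 𝔼} (hK : IsCompact K)
    (hsupp : Function.support g ⊆ K)
    (hg : ContinuousOn g {(0 : 𝔼)}ᶜ)
    (h0 : g =ᶠ[𝓝 (0 : 𝔼)] 0) : Integrable g := by
  have hcont : Continuous g := by
    rw [continuous_iff_continuousAt]
    intro x
    rcases eq_or_ne x 0 with rfl | hx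
    · exact continuousAt_const.congr h0.symm
    · exact hg.continuousAt (isOpen_compl_singleton.mem_nhds hx)
  have hcs : HasCompactSupport g := by
    have : tsupport g ⊆ K := closure_minimal hsupp hK.isClosed
    exact hK.of_isClosed_subset (isClosed_tsupport g) this
  exact hcont.integrable_of_hasCompactSupport hcs

/-- `∫ ∂ᵥ W = 0` for compactly supported `C¹` functions. -/
lemma hardy_integral_fderiv_eq_zero {W : 𝔼 → ℝ} (hW : ContDiff ℝ (⊤ : ℕ∞) W)
    (hsupp : HasCompactSupport W) (v : 𝔼) :
    ∫ x : 𝔼, fderiv ℝ W x v = 0 := by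
  have hWc : Continuous W := hW.continuous
  have hW1 : Differentiable ℝ W := hW.differentiable (by simp)
  have hder : Continuous fun x : 𝔼 => fderiv ℝ W x v :=
    (hW.continuous_fderiv (by simp)).clm_apply continuous_const
  have hcsd : HasCompactSupport fun x : 𝔼 => fderiv ℝ W x v := by
    apply hsupp.mono'
    intro x hx
    have : fderiv ℝ W x ≠ 0 := fun h => hx (by simp [h])
    exact support_fderiv_subset ℝ this
  have hint2 : Integrable (fun x : 𝔼 => (1 : ℝ) * fderiv ℝ W x v) := by
    simpa using hder.integrable_of_hasCompactSupport hcsd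
  have hint3 : Integrable (fun x : 𝔼 => (1 : ℝ) * W x) := by
    simpa using hWc.integrable_of_hasCompactSupport hsupp
  have hint1 : Integrable (fun x : 𝔼 => fderiv ℝ (fun _ : 𝔼 => (1 : ℝ)) x v * W x) := by
    simpa [fderiv_const] using (integrable_zero 𝔼 ℝ (volume : Measure 𝔼))
  have h := integral_mul_fderiv_eq_neg_fderiv_mul_of_integrable hint1 hint2 hint3
    (fun x _ => (differentiable_const (1 : ℝ)) x) (fun x _ => hW1 x)
  simpa [fderiv_const] using h

end Aux

section KeyIBP

variable {d : ℕ}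

local notation "𝔼" => EuclideanSpace ℝ (Fin d)

/-- Key integration-by-parts identity:
`∫ (∇u·x)/|x|² = -(d-2) ∫ u/|x|²` for smooth compactly supported `u` vanishing near `0`. -/
lemma hardy_key_ibp {u : 𝔼 → ℝ} (hu : ContDiff ℝ (⊤ : ℕ∞) u)
    (hsupp : HasCompactSupport u) (h0 : (0 : 𝔼) ∉ tsupport u) :
    ∫ x : 𝔼, fderiv ℝ u x x / ‖x‖ ^ 2
      = -((d : ℝ) - 2) * ∫ x : 𝔼, u x / ‖x‖ ^ 2 := by
  -- a ball around 0 where u vanishes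
  obtain ⟨ε, εpos, hball⟩ :=
    Metric.mem_nhds_iff.1 ((isClosed_tsupport u).isOpen_compl.mem_nhds h0)
  have hu0 : ∀ x ∈ Metric.ball (0 : 𝔼) ε, u x = 0 := fun x hx =>
    image_eq_zero_of_notMem_tsupport (hball hx)
  have hDu0 : ∀ x ∈ Metric.ball (0 : 𝔼) ε, fderiv ℝ u x = 0 := fun x hx => by
    by_contra h
    exact (hball hx) (support_fderiv_subset ℝ h)
  -- the vector-field components
  set W : Fin d → 𝔼 → ℝ := fun k x => u x * x k * (‖x‖ ^ 2)⁻¹ with hWdef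
  have hWball : ∀ k, ∀ x ∈ Metric.ball (0 : 𝔼) ε, W k x = 0 := by
    intro k x hx; simp [hWdef, hu0 x hx]
  have hWsmooth : ∀ k, ContDiff ℝ (⊤ : ℕ∞) (W k) := by
    intro k
    rw [contDiff_iff_contDiffAt]
    intro x
    rcases eq_or_ne x 0 with rfl | hx
    · have hev : W k =ᶠ[𝓝 (0 : 𝔼)] fun _ => 0 :=
        eventually_of_mem (Metric.ball_mem_nhds _ εpos) (hWball k)
      exact contDiffAt_const.congr_of_eventuallyEq hev
    · have hns : ‖x‖ ^ 2 ≠ 0 := pow_ne_zero _ (norm_ne_zero_iff.2 hx)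
      exact ((hu.contDiffAt.mul (EuclideanSpace.proj k).contDiff.contDiffAt).mul
        ((contDiff_norm_sq ℝ).contDiffAt.inv hns))
  have hWsupp : ∀ k, HasCompactSupport (W k) := by
    intro k
    apply hsupp.mono'
    intro x hx
    have : u x ≠ 0 := by
      intro h; apply hx; simp [hWdef, h]
    exact subset_closure this
  -- derivative of W k at x ≠ 0 in direction e k
  have hWderiv : ∀ k, ∀ x : 𝔼, x ≠ 0 →
      fderiv ℝ (W k) x (EuclideanSpace.single k (1 : ℝ))
        = (fderiv ℝ u x (EuclideanSpace.single k 1) * x k + u x) * (‖x‖ ^ 2)⁻¹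
          - u x * x k * (2 * x k) * ((‖x‖ ^ 2) ^ 2)⁻¹ := by
    intro k x hx
    have hns : ‖x‖ ^ 2 ≠ 0 := pow_ne_zero _ (norm_ne_zero_iff.2 hx)
    have h1 : HasFDerivAt u (fderiv ℝ u x) x :=
      (hu.differentiable (by simp) x).hasFDerivAt
    have h2 : HasFDerivAt (fun y : 𝔼 => y k)
        (EuclideanSpace.proj k : EuclideanSpace ℝ (Fin d) →L[ℝ] ℝ) x :=
      (EuclideanSpace.proj k : EuclideanSpace ℝ (Fin d) →L[ℝ] ℝ).hasFDerivAt
    have h3 : HasFDerivAt (fun y : 𝔼 => ‖y‖ ^ 2) (2 • (innerSL ℝ x)) x :=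
      (hasStrictFDerivAt_norm_sq x).hasFDerivAt
    have hinv : HasFDerivAt (fun y : 𝔼 => (‖y‖ ^ 2)⁻¹)
        ((-((‖x‖ ^ 2) ^ 2)⁻¹) • (2 • (innerSL ℝ x))) x :=
      (hasDerivAt_inv hns).comp_hasFDerivAt x h3
    have h4 := ((h1.mul h2).mul hinv)
    have hfd : fderiv ℝ (W k) x = _ := h4.fderiv
    rw [hfd]
    simp only [ContinuousLinearMap.add_apply, ContinuousLinearMap.smul_apply,
      ContinuousLinearMap.coe_smul', Pi.smul_apply, ContinuousLinearMap.comp_apply,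
      innerSL_apply_apply, smul_eq_mul, Pi.mul_apply]
    have hinner : (inner ℝ x (EuclideanSpace.single k (1 : ℝ)) : ℝ) = x k := by
      rw [EuclideanSpace.inner_single_right]; simp
    have hproj : (EuclideanSpace.proj k : EuclideanSpace ℝ (Fin d) →L[ℝ] ℝ)
        (EuclideanSpace.single k (1 : ℝ)) = 1 := by simp
    rw [hinner, hproj]
    ring
  -- pointwise divergence identity
  have hsum : ∀ x : 𝔼, (∑ k, fderiv ℝ (W k) x (EuclideanSpace.single k 1))
      = fderiv ℝ u x x / ‖x‖ ^ 2 + ((d : ℝ) - 2) * (u x / ‖x‖ ^ 2) := by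
    intro x
    rcases eq_or_ne x 0 with rfl | hx
    · have hz : ∀ k, fderiv ℝ (W k) (0 : 𝔼) = 0 := by
        intro k
        have hev : W k =ᶠ[𝓝 (0 : 𝔼)] fun _ => 0 :=
          eventually_of_mem (Metric.ball_mem_nhds _ εpos) (hWball k)
        rw [hev.fderiv_eq]
        exact fderiv_const_apply 0
      simp [hz]
    · have hns : ‖x‖ ^ 2 ≠ 0 := pow_ne_zero _ (norm_ne_zero_iff.2 hx)
      have hx_repr : (∑ k, x k • EuclideanSpace.single k (1 : ℝ)) = x := by
        have := (EuclideanSpace.basisFun (Fin d) ℝ).sum_repr x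
        simpa [EuclideanSpace.basisFun_apply, EuclideanSpace.basisFun_repr] using this
      have hDux : ∀ D : EuclideanSpace ℝ (Fin d) →L[ℝ] ℝ,
          (∑ k, D (EuclideanSpace.single k 1) * x k) = D x := by
        intro D
        conv_rhs => rw [← hx_repr]
        rw [map_sum]
        refine Finset.sum_congr rfl fun k _ => ?_
        rw [D.map_smul]
        simp [mul_comm]
      have hnorm : (∑ k, x k ^ 2) = ‖x‖ ^ 2 := by
        rw [← real_inner_self_eq_norm_sq]
        rw [PiLp.inner_apply]
        simp [sq]
      rw [Finset.sum_congr rfl (fun k _ => hWderiv k x hx)]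
      have hterm : ∀ k : Fin d,
          (fderiv ℝ u x (EuclideanSpace.single k 1) * x k + u x) * (‖x‖ ^ 2)⁻¹
            - u x * x k * (2 * x k) * ((‖x‖ ^ 2) ^ 2)⁻¹
          = fderiv ℝ u x (EuclideanSpace.single k 1) * x k * (‖x‖ ^ 2)⁻¹
            + u x * (‖x‖ ^ 2)⁻¹ - x k ^ 2 * (2 * u x * ((‖x‖ ^ 2) ^ 2)⁻¹) := by
        intro k; ring
      rw [Finset.sum_congr rfl (fun k _ => hterm k)]
      rw [Finset.sum_sub_distrib, Finset.sum_add_distrib, ← Finset.sum_mul,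
        ← Finset.sum_mul, ← Finset.sum_mul, hDux (fderiv ℝ u x), hnorm,
        Finset.sum_const, Finset.card_univ, Fintype.card_fin, nsmul_eq_mul]
      field_simp
      ring
  -- integrability of each derivative component
  have hWint : ∀ k, Integrable
      (fun x : 𝔼 => fderiv ℝ (W k) x (EuclideanSpace.single k 1)) := by
    intro k
    have hc : Continuous (fun x : 𝔼 => fderiv ℝ (W k) x (EuclideanSpace.single k 1)) :=
      ((hWsmooth k).continuous_fderiv (by simp)).clm_apply continuous_const
    have hcs : HasCompactSupport
        (fun x : 𝔼 => fderiv ℝ (W k) x (EuclideanSpace.single k 1)) := by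
      apply (hWsupp k).mono'
      intro x hx
      have : fderiv ℝ (W k) x ≠ 0 := fun h => hx (by simp [h])
      exact support_fderiv_subset ℝ this
    exact hc.integrable_of_hasCompactSupport hcs
  -- integral of divergence is zero
  have hzero : ∫ x : 𝔼, (∑ k, fderiv ℝ (W k) x (EuclideanSpace.single k 1)) = 0 := by
    rw [integral_finset_sum _ (fun k _ => (hWint k))]
    refine Finset.sum_eq_zero fun k _ => ?_
    exact hardy_integral_fderiv_eq_zero (hWsmooth k) (hWsupp k) _
  -- integrability of the two pieces
  have hint_a : Integrable (fun x : 𝔼 => fderiv ℝ u x x / ‖x‖ ^ 2) := by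
    refine hardy_integrable_aux hsupp ?_ ?_ ?_
    · intro x hx
      by_contra hxmem
      have : fderiv ℝ u x = 0 := by
        by_contra h
        exact hxmem (support_fderiv_subset ℝ h)
      exact hx (by simp [this])
    · exact ContinuousOn.div
        (((hu.continuous_fderiv (by simp)).clm_apply continuous_id).continuousOn)
        ((continuous_norm.pow 2).continuousOn)
        (fun x hx => pow_ne_zero _ (norm_ne_zero_iff.2 hx))
    · exact eventually_of_mem (Metric.ball_mem_nhds _ εpos)
        (fun x hx => by simp [hDu0 x hx])
  have hint_b : Integrable (fun x : 𝔼 => u x / ‖x‖ ^ 2) := by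
    refine hardy_integrable_aux hsupp ?_ ?_ ?_
    · intro x hx
      have : u x ≠ 0 := fun h => hx (by simp [h])
      exact subset_closure this
    · exact ContinuousOn.div (hu.continuous.continuousOn)
        ((continuous_norm.pow 2).continuousOn)
        (fun x hx => pow_ne_zero _ (norm_ne_zero_iff.2 hx))
    · exact eventually_of_mem (Metric.ball_mem_nhds _ εpos)
        (fun x hx => by simp [hu0 x hx])
  have hsplit : ∫ x : 𝔼, (∑ k, fderiv ℝ (W k) x (EuclideanSpace.single k 1))
      = (∫ x : 𝔼, fderiv ℝ u x x / ‖x‖ ^ 2)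
        + ((d : ℝ) - 2) * ∫ x : 𝔼, u x / ‖x‖ ^ 2 := by
    rw [integral_congr_ae (Filter.Eventually.of_forall hsum)]
    rw [integral_add hint_a (hint_b.const_mul _)]
    congr 1
    have := integral_smul (μ := (volume : Measure 𝔼)) (((d : ℝ) - 2))
      (fun x : 𝔼 => u x / ‖x‖ ^ 2)
    simpa [smul_eq_mul] using this
  rw [hsplit] at hzero
  linarith

end KeyIBP

/-- **Radial Hardy inequality.** For `d ≥ 3` and every `ψ ∈ C_c^∞(ℝ^d \ {0}, ℂ)`,
`((d-2)²/4) ∫ |ψ(x)|²/|x|² dx ≤ ∫ |∂_r ψ(x)|² dx`, where the radial derivative is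
`∂_r ψ(x) = (x/|x|)·∇ψ(x)`, i.e. the derivative of `ψ` at `x` in the direction `x/|x|`. -/
theorem radial_hardy_inequality (d : ℕ) (hd : 3 ≤ d)
    (ψ : EuclideanSpace ℝ (Fin d) → ℂ)
    (hψ_smooth : ContDiff ℝ (⊤ : ℕ∞) ψ)
    (hψ_supp : HasCompactSupport ψ)
    (hψ_zero : (0 : EuclideanSpace ℝ (Fin d)) ∉ tsupport ψ) :
    ((d : ℝ) - 2) ^ 2 / 4 * ∫ x : EuclideanSpace ℝ (Fin d), ‖ψ x‖ ^ 2 / ‖x‖ ^ 2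
      ≤ ∫ x : EuclideanSpace ℝ (Fin d), ‖fderiv ℝ ψ x (‖x‖⁻¹ • x)‖ ^ 2 := by
  classical
  have hψd : Differentiable ℝ ψ := hψ_smooth.differentiable (by simp)
  -- the modulus-squared function
  set u : EuclideanSpace ℝ (Fin d) → ℝ := fun x => ‖ψ x‖ ^ 2 with hu_def
  have hu_smooth : ContDiff ℝ (⊤ : ℕ∞) u := hψ_smooth.norm_sq (𝕜 := ℝ)
  have hsub : Function.support u ⊆ tsupport ψ := by
    intro x hx
    have : ψ x ≠ 0 := by
      intro h
      apply hx
      simp [hu_def, h]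
    exact subset_closure this
  have hu_supp : HasCompactSupport u := hψ_supp.mono' hsub
  have hu_zero : (0 : EuclideanSpace ℝ (Fin d)) ∉ tsupport u := fun h =>
    hψ_zero (closure_minimal hsub (isClosed_tsupport ψ) h)
  -- fderiv of u
  have hDu : ∀ x v, fderiv ℝ u x v = 2 * (inner ℝ (ψ x) (fderiv ℝ ψ x v) : ℝ) := by
    intro x v
    have h := ((hψd x).hasFDerivAt).norm_sq
    rw [h.fderiv]
    simp [two_smul]
    ring
  -- ball where ψ vanishes
  obtain ⟨ε, εpos, hball⟩ :=
    Metric.mem_nhds_iff.1 ((isClosed_tsupport ψ).isOpen_compl.mem_nhds hψ_zero)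
  have hψ0 : ∀ x ∈ Metric.ball (0 : EuclideanSpace ℝ (Fin d)) ε, ψ x = 0 := fun x hx =>
    image_eq_zero_of_notMem_tsupport (hball hx)
  have hDψ0 : ∀ x ∈ Metric.ball (0 : EuclideanSpace ℝ (Fin d)) ε, fderiv ℝ ψ x = 0 :=
    fun x hx => by
      by_contra h
      exact (hball hx) (support_fderiv_subset ℝ h)
  have hDu0 : ∀ x ∈ Metric.ball (0 : EuclideanSpace ℝ (Fin d)) ε, fderiv ℝ u x = 0 :=
    fun x hx => by
      by_contra h
      have hmem := support_fderiv_subset ℝ h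
      exact (hball hx) (closure_minimal hsub (isClosed_tsupport ψ) hmem)
  -- integrability of the three integrands
  have hint1 : Integrable (fun x : EuclideanSpace ℝ (Fin d) =>
      ‖fderiv ℝ ψ x (‖x‖⁻¹ • x)‖ ^ 2) := by
    refine hardy_integrable_aux hψ_supp ?_ ?_ ?_
    · intro x hx
      have : fderiv ℝ ψ x ≠ 0 := by
        intro h
        exact hx (by simp [h])
      exact support_fderiv_subset ℝ this
    · have hs : ContinuousOn (fun x : EuclideanSpace ℝ (Fin d) => ‖x‖⁻¹ • x)
          {(0 : EuclideanSpace ℝ (Fin d))}ᶜ :=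
        ContinuousOn.smul
          (ContinuousOn.inv₀ continuous_norm.continuousOn
            (fun x hx => norm_ne_zero_iff.2 hx)) continuousOn_id
      exact (((hψ_smooth.continuous_fderiv (by simp)).continuousOn.clm_apply hs).norm.pow 2)
    · exact Filter.eventually_of_mem (Metric.ball_mem_nhds _ εpos)
        (fun x hx => by simp [hDψ0 x hx])
  have hint2 : Integrable (fun x : EuclideanSpace ℝ (Fin d) =>
      fderiv ℝ u x x / ‖x‖ ^ 2) := by
    refine hardy_integrable_aux hψ_supp ?_ ?_ ?_
    · intro x hx
      have h1 : fderiv ℝ u x ≠ 0 := by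
        intro h
        exact hx (by simp [h])
      exact closure_minimal hsub (isClosed_tsupport ψ) (support_fderiv_subset ℝ h1)
    · exact ContinuousOn.div
        (((hu_smooth.continuous_fderiv (by simp)).clm_apply continuous_id).continuousOn)
        ((continuous_norm.pow 2).continuousOn)
        (fun x hx => pow_ne_zero _ (norm_ne_zero_iff.2 hx))
    · exact Filter.eventually_of_mem (Metric.ball_mem_nhds _ εpos)
        (fun x hx => by simp [hDu0 x hx])
  have hint3 : Integrable (fun x : EuclideanSpace ℝ (Fin d) => u x / ‖x‖ ^ 2) := by
    refine hardy_integrable_aux hψ_supp ?_ ?_ ?_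
    · intro x hx
      have : u x ≠ 0 := fun h => hx (by simp [h])
      exact hsub this
    · exact ContinuousOn.div (hu_smooth.continuous.continuousOn)
        ((continuous_norm.pow 2).continuousOn)
        (fun x hx => pow_ne_zero _ (norm_ne_zero_iff.2 hx))
    · exact Filter.eventually_of_mem (Metric.ball_mem_nhds _ εpos)
        (fun x hx => by simp [hu_def, hψ0 x hx])
  -- IBP identity
  have hibp := hardy_key_ibp hu_smooth hu_supp hu_zero
  -- the constant
  set c : ℝ := ((d : ℝ) - 2) / 2 with hc_def
  -- pointwise nonnegativity
  have hpt : ∀ x : EuclideanSpace ℝ (Fin d),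
      0 ≤ ‖fderiv ℝ ψ x (‖x‖⁻¹ • x)‖ ^ 2
        + (c * (fderiv ℝ u x x / ‖x‖ ^ 2) + c ^ 2 * (u x / ‖x‖ ^ 2)) := by
    intro x
    rcases eq_or_ne x 0 with rfl | hx
    · simp
    · have hr : (‖x‖ : ℝ) ≠ 0 := norm_ne_zero_iff.2 hx
      set A : ℂ := fderiv ℝ ψ x (‖x‖⁻¹ • x) with hA_def
      have hAx : fderiv ℝ ψ x x = ‖x‖ • A := by
        rw [hA_def, (fderiv ℝ ψ x).map_smul, smul_smul, mul_inv_cancel₀ hr, one_smul]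
      have hf2 : fderiv ℝ u x x = 2 * (‖x‖ * ((ψ x).re * A.re + (ψ x).im * A.im)) := by
        rw [hDu x x, hAx, real_inner_smul_right]
        have h' : (inner ℝ (ψ x) A : ℝ) = (ψ x).re * A.re + (ψ x).im * A.im := by
          simp [Complex.inner, Complex.mul_re]; ring
        rw [h']
      have hf1 : ‖A‖ ^ 2 = A.re ^ 2 + A.im ^ 2 := by
        rw [Complex.sq_norm, Complex.normSq_apply]
        ring
      have hf3 : u x = (ψ x).re ^ 2 + (ψ x).im ^ 2 := by
        show ‖ψ x‖ ^ 2 = _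
        rw [Complex.sq_norm, Complex.normSq_apply]
        ring
      have key : ‖A‖ ^ 2 + (c * (fderiv ℝ u x x / ‖x‖ ^ 2) + c ^ 2 * (u x / ‖x‖ ^ 2))
          = (A.re + c * ((ψ x).re / ‖x‖)) ^ 2 + (A.im + c * ((ψ x).im / ‖x‖)) ^ 2 := by
        rw [hf1, hf2, hf3]
        field_simp
        ring
      rw [key]
      positivity
  -- integrate
  have h0' : (0 : ℝ) ≤ ∫ x : EuclideanSpace ℝ (Fin d),
      (‖fderiv ℝ ψ x (‖x‖⁻¹ • x)‖ ^ 2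
        + (c * (fderiv ℝ u x x / ‖x‖ ^ 2) + c ^ 2 * (u x / ‖x‖ ^ 2))) :=
    integral_nonneg hpt
  have hint23 : Integrable (fun x : EuclideanSpace ℝ (Fin d) =>
      c * (fderiv ℝ u x x / ‖x‖ ^ 2) + c ^ 2 * (u x / ‖x‖ ^ 2)) volume :=
    (hint2.const_mul c).add (hint3.const_mul (c ^ 2))
  rw [integral_add hint1 hint23] at h0'
  rw [integral_add (hint2.const_mul c) (hint3.const_mul (c ^ 2))] at h0'
  have e2 : ∫ x : EuclideanSpace ℝ (Fin d), c * (fderiv ℝ u x x / ‖x‖ ^ 2)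
      = c * ∫ x : EuclideanSpace ℝ (Fin d), fderiv ℝ u x x / ‖x‖ ^ 2 := by
    simpa [smul_eq_mul] using integral_smul (μ := (volume : Measure (EuclideanSpace ℝ (Fin d))))
      c (fun x => fderiv ℝ u x x / ‖x‖ ^ 2)
  have e3 : ∫ x : EuclideanSpace ℝ (Fin d), c ^ 2 * (u x / ‖x‖ ^ 2)
      = c ^ 2 * ∫ x : EuclideanSpace ℝ (Fin d), u x / ‖x‖ ^ 2 := by
    simpa [smul_eq_mul] using integral_smul (μ := (volume : Measure (EuclideanSpace ℝ (Fin d))))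
      (c ^ 2) (fun x => u x / ‖x‖ ^ 2)
  rw [e2, e3, hibp] at h0'
  have hgoal : (∫ x : EuclideanSpace ℝ (Fin d), ‖ψ x‖ ^ 2 / ‖x‖ ^ 2)
      = ∫ x : EuclideanSpace ℝ (Fin d), u x / ‖x‖ ^ 2 := rfl
  rw [hgoal]
  have hkey : c * (-((d : ℝ) - 2) * ∫ x : EuclideanSpace ℝ (Fin d), u x / ‖x‖ ^ 2)
      + c ^ 2 * ∫ x : EuclideanSpace ℝ (Fin d), u x / ‖x‖ ^ 2
      = -(((d : ℝ) - 2) ^ 2 / 4 * ∫ x : EuclideanSpace ℝ (Fin d), u x / ‖x‖ ^ 2) := by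
    rw [hc_def]; ring
  linarith [h0', hkey]
end

section
/- Let ℓ₀ ≥ 1 be an integer and let ψ ∈ C_c^∞(ℝ² \ {0}, ℂ) satisfy ∫_0^{2π} ψ(r cos θ, r sin θ) e^{-imθ} dθ = 0 for every r > 0 and every integer m with |m| < ℓ₀ (i.e. all angular Fourier modes of ψ of order less than ℓ₀ vanish). Then ℓ₀² · ∫_{ℝ²} |ψ(x)|²/|x|² dx ≤ ∫_{ℝ²} |∇ψ(x)|² dx. -/
open MeasureTheory Real Set Complex intervalIntegral
open scoped ENNReal

noncomputable section



lemma two_pi_pos' : (0:ℝ) < 2 * π := Real.two_pi_pos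

/-- normal form of fourierCoeffOn on (0, 2π) -/
lemma fourierCoeffOn_nf (h : ℝ → ℂ) (n : ℤ) :
    fourierCoeffOn two_pi_pos' h n
      = ((2*π)⁻¹ : ℝ) • ∫ θ in (0:ℝ)..(2*π), h θ * Complex.exp (-Complex.I * n * θ) := by
  rw [fourierCoeffOn_eq_integral]
  congr 1
  · norm_num
  · apply intervalIntegral.integral_congr
    intro x hx
    simp only [fourier_coe_apply]
    rw [smul_eq_mul, mul_comm]
    congr 1
    congr 1
    push_cast
    rw [div_eq_iff (by norm_num : (2*(π:ℂ) - 0) ≠ 0)]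
    ring

lemma parseval_periodic {h : ℝ → ℂ} (hc : Continuous h) (hper : Function.Periodic h (2*π)) :
    Summable (fun n : ℤ => ‖fourierCoeffOn two_pi_pos' h n‖^2) ∧
    (∫ θ in (0:ℝ)..(2*π), ‖h θ‖^2)
      = (2*π) * ∑' n : ℤ, ‖fourierCoeffOn two_pi_pos' h n‖^2 := by
  haveI : Fact (0 < 2*π) := ⟨Real.two_pi_pos⟩
  have hF0 : h 0 = h (0 + 2*π) := by rw [zero_add, ← hper 0, zero_add]
  set F : C(AddCircle (2*π), ℂ) :=
    ⟨AddCircle.liftIco (2*π) 0 h, AddCircle.liftIco_continuous hF0 hc.continuousOn⟩ with hFdef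
  -- coefficients agree
  have hcoe : ∀ n : ℤ, fourierCoeff (F : AddCircle (2*π) → ℂ) n = fourierCoeffOn two_pi_pos' h n := by
    intro n
    rw [show (F : AddCircle (2*π) → ℂ) = AddCircle.liftIco (2*π) 0 h from rfl,
      fourierCoeff_liftIco_eq (T := 2*π) h n]
    rw [fourierCoeffOn_nf, fourierCoeffOn_eq_integral]
    rw [zero_add]
    congr 1
    · norm_num
    · apply intervalIntegral.integral_congr
      intro x hx
      simp only [fourier_coe_apply]
      rw [smul_eq_mul, mul_comm]
      congr 2
      push_cast
      rw [div_eq_iff (by push_cast; norm_num : ((2:ℂ)*(π:ℂ) - 0) ≠ 0)]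
      ring
  have key := tsum_sq_fourierCoeff (ContinuousMap.toLp (E := ℂ) 2 AddCircle.haarAddCircle ℂ F)
  have hc2 : ∀ n : ℤ, fourierCoeff (↑(ContinuousMap.toLp (E := ℂ) 2 AddCircle.haarAddCircle ℂ F) :
      AddCircle (2*π) → ℂ) n = fourierCoeffOn two_pi_pos' h n := by
    intro n; rw [fourierCoeff_toLp, hcoe]
  have hsum : Summable (fun n : ℤ => ‖fourierCoeffOn two_pi_pos' h n‖^2) := by
    have hm := lp.memℓp (fourierBasis.repr (ContinuousMap.toLp (E := ℂ) 2 AddCircle.haarAddCircle ℂ F))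
    rw [memℓp_gen_iff (by norm_num)] at hm
    have heq : ∀ n : ℤ, ‖fourierBasis.repr (ContinuousMap.toLp (E := ℂ) 2 AddCircle.haarAddCircle ℂ F) n‖
        ^ ((2:ℝ≥0∞).toReal) = ‖fourierCoeffOn two_pi_pos' h n‖^2 := by
      intro n
      rw [fourierBasis_repr, hc2]
      norm_num
    exact (summable_congr heq).1 hm
  refine ⟨hsum, ?_⟩
  -- rewrite key's LHS
  have key2 : ∑' n : ℤ, ‖fourierCoeffOn two_pi_pos' h n‖^2
      = ∫ t : AddCircle (2*π), ‖(ContinuousMap.toLp (E := ℂ) 2 AddCircle.haarAddCircle ℂ F) t‖^2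
        ∂AddCircle.haarAddCircle := by
    rw [← key]
    exact tsum_congr fun n => by rw [hc2]
  -- integral over haar vs volume
  have hae : ∫ t : AddCircle (2*π), ‖(ContinuousMap.toLp (E := ℂ) 2 AddCircle.haarAddCircle ℂ F) t‖^2
        ∂AddCircle.haarAddCircle = ∫ t : AddCircle (2*π), ‖F t‖^2 ∂AddCircle.haarAddCircle := by
    apply MeasureTheory.integral_congr_ae
    filter_upwards [ContinuousMap.coeFn_toLp (E := ℂ) (p := 2) (μ := AddCircle.haarAddCircle) (𝕜 := ℂ) F] with t ht
    rw [ht]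
  have hvol : (∫ θ in (0:ℝ)..(2*π), ‖h θ‖^2) = ∫ t : AddCircle (2*π), ‖F t‖^2 := by
    have := AddCircle.intervalIntegral_preimage (2*π) 0 (fun t => ‖F t‖^2)
    rw [zero_add] at this
    rw [← this]
    apply intervalIntegral.integral_congr_ae
    filter_upwards [compl_mem_ae_iff.mpr (by simp : volume {(2*π : ℝ)} = 0)] with x hx hx2
    have hx' : x ∈ Ico (0:ℝ) (0 + 2*π) := by
      rw [Set.uIoc_of_le Real.two_pi_pos.le] at hx2
      constructor
      · exact le_of_lt hx2.1
      · rw [zero_add]; exact lt_of_le_of_ne hx2.2 hx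
    rw [show F ((x : ℝ) : AddCircle (2*π)) = h x from AddCircle.liftIco_coe_apply hx']
  have hsm : ∫ t : AddCircle (2*π), ‖F t‖^2
      = (2*π) * ∫ t : AddCircle (2*π), ‖F t‖^2 ∂AddCircle.haarAddCircle := by
    rw [AddCircle.volume_eq_smul_haarAddCircle, MeasureTheory.integral_smul_measure _ _,
      ENNReal.toReal_ofReal Real.two_pi_pos.le, smul_eq_mul]
  rw [hvol, hsm, ← hae, ← key2]

lemma circle_poincare (ℓ₀ : ℕ) (hℓ₀ : 1 ≤ ℓ₀) {g g' : ℝ → ℂ}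
    (hg : Continuous g) (hg' : Continuous g')
    (hder : ∀ θ : ℝ, HasDerivAt g (g' θ) θ)
    (hper : Function.Periodic g (2*π)) (hper' : Function.Periodic g' (2*π))
    (hm : ∀ m : ℤ, |m| < (ℓ₀:ℤ) →
      (∫ θ in (0:ℝ)..(2*π), g θ * Complex.exp (-Complex.I * m * θ)) = 0) :
    (ℓ₀:ℝ)^2 * ∫ θ in (0:ℝ)..(2*π), ‖g θ‖^2 ≤ ∫ θ in (0:ℝ)..(2*π), ‖g' θ‖^2 := by
  obtain ⟨Sg, Pg⟩ := parseval_periodic hg hper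
  obtain ⟨Sg', Pg'⟩ := parseval_periodic hg' hper'
  have hzero : ∀ m : ℤ, |m| < (ℓ₀:ℤ) → fourierCoeffOn two_pi_pos' g m = 0 := by
    intro m hmlt
    rw [fourierCoeffOn_nf, hm m hmlt, smul_zero]
  have hrel : ∀ n : ℤ, n ≠ 0 → fourierCoeffOn two_pi_pos' g' n
      = Complex.I * n * fourierCoeffOn two_pi_pos' g n := by
    intro n hn
    have h1 := fourierCoeffOn_of_hasDerivAt two_pi_pos' hn
      (fun x _ => hder x) (hg'.intervalIntegrable 0 (2*π))
    have hg2 : g (2*π) = g 0 := by simpa using hper 0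
    rw [hg2, sub_self, mul_zero, zero_sub] at h1
    push_cast at h1
    rw [h1]
    have hpi : (π:ℂ) ≠ 0 := Complex.ofReal_ne_zero.mpr Real.pi_ne_zero
    have hn' : (n:ℂ) ≠ 0 := Int.cast_ne_zero.mpr hn
    field_simp
    ring
  have hterm : ∀ n : ℤ, (ℓ₀:ℝ)^2 * ‖fourierCoeffOn two_pi_pos' g n‖^2
      ≤ ‖fourierCoeffOn two_pi_pos' g' n‖^2 := by
    intro n
    by_cases hlt : |n| < (ℓ₀:ℤ)
    · rw [hzero n hlt]
      simp [sq_nonneg]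
    · push_neg at hlt
      have hn : n ≠ 0 := by
        intro h
        rw [h] at hlt
        simp only [abs_zero] at hlt
        omega
      rw [hrel n hn]
      have hnorm : ‖Complex.I * n * fourierCoeffOn two_pi_pos' g n‖
          = |(n:ℝ)| * ‖fourierCoeffOn two_pi_pos' g n‖ := by
        simp [norm_mul]
      rw [hnorm, mul_pow]
      have h2 : (ℓ₀:ℝ) ≤ |(n:ℝ)| := by
        have := hlt
        rw [← Int.cast_abs]
        exact_mod_cast this
      have h3 : (0:ℝ) ≤ (ℓ₀:ℝ) := Nat.cast_nonneg _
      have h4 : (0:ℝ) ≤ ‖fourierCoeffOn two_pi_pos' g n‖^2 := sq_nonneg _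
      have h5 : (ℓ₀:ℝ)^2 ≤ |(n:ℝ)|^2 := by
        apply pow_le_pow_left₀ h3 h2
      nlinarith
  rw [Pg, Pg']
  calc (ℓ₀:ℝ)^2 * (2*π * ∑' n : ℤ, ‖fourierCoeffOn two_pi_pos' g n‖^2)
      = 2*π * ∑' n : ℤ, (ℓ₀:ℝ)^2 * ‖fourierCoeffOn two_pi_pos' g n‖^2 := by
        rw [tsum_mul_left]; ring
    _ ≤ 2*π * ∑' n : ℤ, ‖fourierCoeffOn two_pi_pos' g' n‖^2 := by
        apply mul_le_mul_of_nonneg_left _ Real.two_pi_pos.le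
        exact (Sg.mul_left _).tsum_le_tsum hterm Sg'

/-- the canonical linear map ℝ×ℝ → ℝ² -/
def L2map : (ℝ × ℝ) →L[ℝ] EuclideanSpace ℝ (Fin 2) :=
  (ContinuousLinearMap.fst ℝ ℝ ℝ).smulRight (EuclideanSpace.single 0 1)
  + (ContinuousLinearMap.snd ℝ ℝ ℝ).smulRight (EuclideanSpace.single 1 1)

lemma L2map_apply (p : ℝ × ℝ) :
    L2map p = (WithLp.equiv 2 (Fin 2 → ℝ)).symm ![p.1, p.2] := by
  ext i
  fin_cases i <;>
    simp [L2map, EuclideanSpace.single_apply]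

lemma L2map_norm (p : ℝ × ℝ) : ‖L2map p‖ = Real.sqrt (p.1^2 + p.2^2) := by
  rw [EuclideanSpace.norm_eq, Fin.sum_univ_two]
  have h0 : L2map p 0 = p.1 := by simp [L2map, EuclideanSpace.single_apply]
  have h1 : L2map p 1 = p.2 := by simp [L2map, EuclideanSpace.single_apply]
  rw [h0, h1]
  simp [sq_abs]

lemma L2map_norm_polar (r θ : ℝ) (hr : 0 ≤ r) :
    ‖L2map (r * Real.cos θ, r * Real.sin θ)‖ = r := by
  rw [L2map_norm]
  have : (r * Real.cos θ)^2 + (r * Real.sin θ)^2 = r^2 := by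
    have := Real.sin_sq_add_cos_sq θ
    nlinarith
  rw [this, Real.sqrt_sq hr]

lemma rot_sq (a b : ℂ) (c s : ℝ) (h : c^2 + s^2 = 1) :
    ‖(-s) • a + c • b‖^2 ≤ ‖a‖^2 + ‖b‖^2 := by
  have e1 : ∀ z : ℂ, ‖z‖^2 = z.re^2 + z.im^2 := by
    intro z
    rw [Complex.sq_norm, Complex.normSq_apply]
    ring
  rw [e1, e1, e1]
  simp only [Complex.add_re, Complex.add_im, Complex.real_smul, Complex.mul_re, Complex.mul_im,
    Complex.ofReal_re, Complex.ofReal_im, Complex.ofReal_neg, Complex.neg_re, Complex.neg_im]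
  ring_nf
  nlinarith [sq_nonneg (c*a.re + s*b.re), sq_nonneg (c*a.im + s*b.im), sq_nonneg a.re,
    sq_nonneg a.im, sq_nonneg b.re, sq_nonneg b.im]

lemma measpres_L2map :
    MeasurePreserving (fun p : ℝ × ℝ => L2map p) volume volume := by
  have h1 := (EuclideanSpace.volume_preserving_symm_measurableEquiv_toLp (Fin 2)).symm
  have h2 := (volume_preserving_finTwoArrow ℝ).symm
  have h3 := h1.comp h2
  convert h3 using 1
  · rfl
  funext p
  rw [L2map_apply]
  rfl

lemma integral_L2map (F : EuclideanSpace ℝ (Fin 2) → ℝ) :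
    ∫ x : EuclideanSpace ℝ (Fin 2), F x = ∫ p : ℝ × ℝ, F (L2map p) := by
  have hemb : MeasurableEmbedding (fun p : ℝ × ℝ => L2map p) := by
    have : (fun p : ℝ × ℝ => L2map p)
        = (((MeasurableEquiv.toLp 2 (Fin 2 → ℝ)).symm).symm : (Fin 2 → ℝ) ≃ᵐ _)
          ∘ (MeasurableEquiv.finTwoArrow.symm : (ℝ × ℝ) ≃ᵐ (Fin 2 → ℝ)) := by
      funext p
      rw [L2map_apply]
      rfl
    rw [this]
    exact (((MeasurableEquiv.toLp 2 (Fin 2 → ℝ)).symm).symm.measurableEmbedding).comp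
      (MeasurableEquiv.finTwoArrow.symm.measurableEmbedding)
  exact (measpres_L2map.integral_comp hemb F).symm

lemma key_integrableOn {f : ℝ × ℝ → ℝ} {ε R : ℝ} (hε : 0 < ε)
    (hf : ContinuousOn f {p : ℝ × ℝ | 0 < p.1})
    (h0 : ∀ p : ℝ × ℝ, 0 < p.1 → (p.1 < ε ∨ R < p.1) → f p = 0) :
    IntegrableOn f (Ioi (0:ℝ) ×ˢ Ioo (-π) π) := by
  have hK : IsCompact (Icc ε R ×ˢ Icc (-π) π : Set (ℝ × ℝ)) := isCompact_Icc.prod isCompact_Icc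
  have hKsub : (Icc ε R ×ˢ Icc (-π) π : Set (ℝ × ℝ)) ⊆ {p | 0 < p.1} :=
    fun p hp => lt_of_lt_of_le hε hp.1.1
  have hint : IntegrableOn f (Icc ε R ×ˢ Icc (-π) π) := (hf.mono hKsub).integrableOn_compact hK
  have hmeasT : MeasurableSet (Ioi (0:ℝ) ×ˢ Ioo (-π) π) := measurableSet_Ioi.prod measurableSet_Ioo
  have hmeasK : MeasurableSet (Icc ε R ×ˢ Icc (-π) π : Set (ℝ × ℝ)) :=
    measurableSet_Icc.prod measurableSet_Icc
  have hzero : IntegrableOn f ((Ioi (0:ℝ) ×ˢ Ioo (-π) π) \ (Icc ε R ×ˢ Icc (-π) π)) := by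
    apply IntegrableOn.congr_fun (integrableOn_zero (ε' := ℝ)) _ (hmeasT.diff hmeasK)
    intro p hp
    obtain ⟨hpT, hpK⟩ := hp
    have hθ : p.2 ∈ Icc (-π) π := ⟨hpT.2.1.le, hpT.2.2.le⟩
    have : p.1 ∉ Icc ε R := by
      intro hr
      exact hpK ⟨hr, hθ⟩
    rw [Set.mem_Icc, not_and_or, not_le, not_le] at this
    exact ((h0 p hpT.1 this).symm : (0:ℝ) = f p)
  have hsub : (Ioi (0:ℝ) ×ˢ Ioo (-π) π)
      ⊆ (Icc ε R ×ˢ Icc (-π) π) ∪ ((Ioi (0:ℝ) ×ˢ Ioo (-π) π) \ (Icc ε R ×ˢ Icc (-π) π)) := by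
    intro p hp
    by_cases h : p ∈ (Icc ε R ×ˢ Icc (-π) π : Set (ℝ × ℝ))
    · exact Or.inl h
    · exact Or.inr ⟨hp, h⟩
  exact (hint.union hzero).mono_set hsub

lemma fubini_T {f : ℝ × ℝ → ℝ} (hf : IntegrableOn f (Ioi (0:ℝ) ×ˢ Ioo (-π) π)) :
    ∫ p in Ioi (0:ℝ) ×ˢ Ioo (-π) π, f p
      = ∫ r in Ioi (0:ℝ), ∫ θ in Ioo (-π) π, f (r, θ) := by
  rw [Measure.volume_eq_prod] at hf ⊢
  exact setIntegral_prod f hf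

lemma fubini_int {f : ℝ × ℝ → ℝ} (hf : IntegrableOn f (Ioi (0:ℝ) ×ˢ Ioo (-π) π)) :
    IntegrableOn (fun r => ∫ θ in Ioo (-π) π, f (r, θ)) (Ioi (0:ℝ)) := by
  rw [Measure.volume_eq_prod, IntegrableOn, ← Measure.prod_restrict] at hf
  exact hf.integral_prod_left

lemma L2map_e0 : L2map (1, 0) = EuclideanSpace.single (0 : Fin 2) (1:ℝ) := by
  ext i
  fin_cases i <;> simp [L2map, EuclideanSpace.single_apply]

lemma L2map_e1 : L2map (0, 1) = EuclideanSpace.single (1 : Fin 2) (1:ℝ) := by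
  ext i
  fin_cases i <;> simp [L2map, EuclideanSpace.single_apply]

/-- **Two-dimensional frequency-dependent Hardy inequality.** Let `ℓ₀ ≥ 1` and let
`ψ ∈ C_c^∞(ℝ² \ {0}, ℂ)` have all angular Fourier modes of order `< ℓ₀` vanishing:
`∫_0^{2π} ψ(r cos θ, r sin θ) e^{-imθ} dθ = 0` for all `r > 0` and all `m : ℤ` with
`|m| < ℓ₀`. Then `ℓ₀² ∫ |ψ(x)|²/|x|² dx ≤ ∫ |∇ψ(x)|² dx`. -/
theorem hardy_inequality_high_angular_modes_2D (ℓ₀ : ℕ) (hℓ₀ : 1 ≤ ℓ₀)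
    (ψ : EuclideanSpace ℝ (Fin 2) → ℂ)
    (hψ_smooth : ContDiff ℝ (⊤ : ℕ∞) ψ)
    (hψ_supp : HasCompactSupport ψ)
    (hψ_zero : (0 : EuclideanSpace ℝ (Fin 2)) ∉ tsupport ψ)
    (hmodes : ∀ r : ℝ, 0 < r → ∀ m : ℤ, |m| < (ℓ₀ : ℤ) →
      (∫ θ in (0 : ℝ)..(2 * π),
        ψ ((WithLp.equiv 2 (Fin 2 → ℝ)).symm ![r * Real.cos θ, r * Real.sin θ])
          * Complex.exp (-Complex.I * m * θ)) = 0) :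
    (ℓ₀ : ℝ) ^ 2 * ∫ x : EuclideanSpace ℝ (Fin 2), ‖ψ x‖ ^ 2 / ‖x‖ ^ 2
      ≤ ∫ x : EuclideanSpace ℝ (Fin 2),
          ∑ k : Fin 2, ‖fderiv ℝ ψ x (EuclideanSpace.single k 1)‖ ^ 2 := by
  classical
  -- support radii
  obtain ⟨ε, hε, hball⟩ : ∃ ε > 0, ∀ x : EuclideanSpace ℝ (Fin 2), ‖x‖ < ε → x ∉ tsupport ψ := by
    rcases Metric.isOpen_iff.1 (isClosed_tsupport ψ).isOpen_compl 0 hψ_zero with ⟨ε, hε, hsub⟩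
    exact ⟨ε, hε, fun x hx => hsub (by simpa [Metric.mem_ball, dist_zero_right] using hx)⟩
  obtain ⟨R, hRbig⟩ : ∃ R : ℝ, ∀ x : EuclideanSpace ℝ (Fin 2), R < ‖x‖ → x ∉ tsupport ψ := by
    obtain ⟨R, hR⟩ := hψ_supp.isBounded.subset_closedBall 0
    exact ⟨R, fun x hx hmem => absurd (by simpa [Metric.mem_closedBall, dist_zero_right] using hR hmem) (not_le.2 hx)⟩
  have hψz : ∀ x : EuclideanSpace ℝ (Fin 2), (‖x‖ < ε ∨ R < ‖x‖) → ψ x = 0 := by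
    intro x hx
    rcases hx with hx | hx
    · exact image_eq_zero_of_notMem_tsupport (hball x hx)
    · exact image_eq_zero_of_notMem_tsupport (hRbig x hx)
  have hDz : ∀ x : EuclideanSpace ℝ (Fin 2), (‖x‖ < ε ∨ R < ‖x‖) → fderiv ℝ ψ x = 0 := by
    intro x hx
    have hns : x ∉ tsupport ψ := by
      rcases hx with hx | hx
      · exact hball x hx
      · exact hRbig x hx
    exact image_eq_zero_of_notMem_tsupport (fun h => hns (tsupport_fderiv_subset ℝ h))
  have hψcont : Continuous ψ := hψ_smooth.continuous
  have hDcont : Continuous (fderiv ℝ ψ) := hψ_smooth.continuous_fderiv (by simp)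
  set T : Set (ℝ×ℝ) := Ioi (0:ℝ) ×ˢ Ioo (-π) π with hTdef
  have hTmeas : MeasurableSet T := measurableSet_Ioi.prod measurableSet_Ioo
  set Pol : ℝ×ℝ → ℝ×ℝ := fun q => (q.1 * Real.cos q.2, q.1 * Real.sin q.2) with hPoldef
  have hcPol : Continuous Pol := by
    apply Continuous.prodMk
    · exact continuous_fst.mul (Real.continuous_cos.comp continuous_snd)
    · exact continuous_fst.mul (Real.continuous_sin.comp continuous_snd)
  set G₁ : ℝ×ℝ → ℝ := fun q => ‖ψ (L2map (Pol q))‖^2 / q.1 with hG₁def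
  set G₂ : ℝ×ℝ → ℝ := fun q =>
    q.1 * ∑ k : Fin 2, ‖fderiv ℝ ψ (L2map (Pol q)) (EuclideanSpace.single k 1)‖^2 with hG₂def
  set G₃ : ℝ×ℝ → ℝ := fun q =>
    ‖fderiv ℝ ψ (L2map (Pol q)) (L2map (q.1 * -Real.sin q.2, q.1 * Real.cos q.2))‖^2 / q.1
    with hG₃def
  have hPolnorm : ∀ q : ℝ×ℝ, 0 ≤ q.1 → ‖L2map (Pol q)‖ = q.1 := fun q hq =>
    L2map_norm_polar q.1 q.2 hq
  -- continuity of the three integrands on the half plane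
  have hcont1 : ContinuousOn G₁ {p : ℝ×ℝ | 0 < p.1} := by
    apply ContinuousOn.div
    · exact ((hψcont.comp (L2map.continuous.comp hcPol)).norm.pow 2).continuousOn
    · exact continuous_fst.continuousOn
    · exact fun p hp => ne_of_gt hp
  have hcont2 : ContinuousOn G₂ {p : ℝ×ℝ | 0 < p.1} := by
    apply Continuous.continuousOn
    apply continuous_fst.mul
    apply continuous_finset_sum
    intro k _
    exact (((hDcont.comp (L2map.continuous.comp hcPol)).clm_apply continuous_const).norm.pow 2)
  have hcont3 : ContinuousOn G₃ {p : ℝ×ℝ | 0 < p.1} := by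
    apply ContinuousOn.div
    · apply Continuous.continuousOn
      apply Continuous.pow
      apply Continuous.norm
      apply (hDcont.comp (L2map.continuous.comp hcPol)).clm_apply
      apply L2map.continuous.comp
      apply Continuous.prodMk
      · exact continuous_fst.mul ((Real.continuous_sin.comp continuous_snd).neg)
      · exact continuous_fst.mul (Real.continuous_cos.comp continuous_snd)
    · exact continuous_fst.continuousOn
    · exact fun p hp => ne_of_gt hp
  -- vanishing of the three integrands for r outside [ε, R]
  have hout : ∀ p : ℝ×ℝ, 0 < p.1 → (p.1 < ε ∨ R < p.1) →
      (‖L2map (Pol p)‖ < ε ∨ R < ‖L2map (Pol p)‖) := by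
    intro p hp hpr
    rw [hPolnorm p hp.le]
    exact hpr
  have hv1 : ∀ p : ℝ×ℝ, 0 < p.1 → (p.1 < ε ∨ R < p.1) → G₁ p = 0 := by
    intro p hp hpr
    simp only [hG₁def, hψz _ (hout p hp hpr), norm_zero]
    norm_num
  have hv2 : ∀ p : ℝ×ℝ, 0 < p.1 → (p.1 < ε ∨ R < p.1) → G₂ p = 0 := by
    intro p hp hpr
    simp only [hG₂def, hDz _ (hout p hp hpr)]
    simp
  have hv3 : ∀ p : ℝ×ℝ, 0 < p.1 → (p.1 < ε ∨ R < p.1) → G₃ p = 0 := by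
    intro p hp hpr
    simp only [hG₃def, hDz _ (hout p hp hpr)]
    simp
  have hi1 : IntegrableOn G₁ T := key_integrableOn hε hcont1 hv1
  have hi2 : IntegrableOn G₂ T := key_integrableOn hε hcont2 hv2
  have hi3 : IntegrableOn G₃ T := key_integrableOn hε hcont3 hv3
  -- transfer LHS and RHS integrals to polar form
  have hLHS : (∫ x : EuclideanSpace ℝ (Fin 2), ‖ψ x‖^2/‖x‖^2) = ∫ q in T, G₁ q := by
    rw [integral_L2map (fun x => ‖ψ x‖^2/‖x‖^2)]
    rw [← integral_comp_polarCoord_symm (fun p : ℝ×ℝ => ‖ψ (L2map p)‖^2/‖L2map p‖^2)]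
    rw [polarCoord_target, ← hTdef]
    apply setIntegral_congr_fun hTmeas
    intro q hq
    have hq1 : (0:ℝ) < q.1 := hq.1
    simp only [polarCoord_symm_apply, smul_eq_mul]
    rw [show ((q.1 * Real.cos q.2, q.1 * Real.sin q.2) : ℝ×ℝ) = Pol q from rfl]
    rw [hPolnorm q hq1.le]
    simp only [hG₁def]
    field_simp
  have hRHS : (∫ x : EuclideanSpace ℝ (Fin 2),
      ∑ k : Fin 2, ‖fderiv ℝ ψ x (EuclideanSpace.single k 1)‖^2) = ∫ q in T, G₂ q := by
    rw [integral_L2map (fun x => ∑ k : Fin 2, ‖fderiv ℝ ψ x (EuclideanSpace.single k 1)‖^2)]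
    rw [← integral_comp_polarCoord_symm
      (fun p : ℝ×ℝ => ∑ k : Fin 2, ‖fderiv ℝ ψ (L2map p) (EuclideanSpace.single k 1)‖^2)]
    rw [polarCoord_target, ← hTdef]
    apply setIntegral_congr_fun hTmeas
    intro q hq
    simp only [polarCoord_symm_apply, smul_eq_mul, hG₂def]
    rfl
  -- pointwise comparison between G₃ and G₂ on T
  have hstep1 : ∫ q in T, G₃ q ≤ ∫ q in T, G₂ q := by
    apply setIntegral_mono_on hi3 hi2 hTmeas
    intro q hq
    have hq1 : (0:ℝ) < q.1 := hq.1
    simp only [hG₂def, hG₃def, Fin.sum_univ_two]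
    have hpair : ((q.1 * -Real.sin q.2, q.1 * Real.cos q.2) : ℝ×ℝ)
        = q.1 • ((-Real.sin q.2) • ((1,0) : ℝ×ℝ) + (Real.cos q.2) • ((0,1) : ℝ×ℝ)) := by
      simp [Prod.ext_iff]
    have hvec : L2map (q.1 * -Real.sin q.2, q.1 * Real.cos q.2)
        = q.1 • ((-Real.sin q.2) • EuclideanSpace.single (0:Fin 2) (1:ℝ)
            + (Real.cos q.2) • EuclideanSpace.single (1:Fin 2) (1:ℝ)) := by
      rw [hpair, _root_.map_smul, map_add, _root_.map_smul, _root_.map_smul, L2map_e0, L2map_e1]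
    rw [hvec, _root_.map_smul, map_add, _root_.map_smul, _root_.map_smul]
    set a := fderiv ℝ ψ (L2map (Pol q)) (EuclideanSpace.single (0:Fin 2) (1:ℝ)) with hadef
    set b := fderiv ℝ ψ (L2map (Pol q)) (EuclideanSpace.single (1:Fin 2) (1:ℝ)) with hbdef
    have hrot := rot_sq a b (Real.cos q.2) (Real.sin q.2)
      (by rw [add_comm]; exact Real.sin_sq_add_cos_sq q.2)
    have hn : ‖q.1 • ((-Real.sin q.2) • a + (Real.cos q.2) • b)‖^2
        = q.1^2 * ‖(-Real.sin q.2) • a + (Real.cos q.2) • b‖^2 := by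
      rw [norm_smul, mul_pow, Real.norm_eq_abs, _root_.sq_abs]
    rw [hn, div_le_iff₀ hq1]
    calc q.1^2 * ‖(-Real.sin q.2) • a + (Real.cos q.2) • b‖^2
        ≤ q.1^2 * (‖a‖^2 + ‖b‖^2) := mul_le_mul_of_nonneg_left hrot (by positivity)
      _ = q.1 * (‖a‖^2 + ‖b‖^2) * q.1 := by ring
  -- per-radius Poincaré inequality
  have hper_r : ∀ r : ℝ, r ∈ Ioi (0:ℝ) →
      (ℓ₀:ℝ)^2 * ∫ θ in Ioo (-π) π, G₁ (r, θ) ≤ ∫ θ in Ioo (-π) π, G₃ (r, θ) := by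
    intro r hr
    rw [mem_Ioi] at hr
    set g : ℝ → ℂ := fun θ => ψ (L2map (r * Real.cos θ, r * Real.sin θ)) with hgdef
    set g' : ℝ → ℂ := fun θ => fderiv ℝ ψ (L2map (r * Real.cos θ, r * Real.sin θ))
      (L2map (r * -Real.sin θ, r * Real.cos θ)) with hg'def
    have hder : ∀ θ : ℝ, HasDerivAt g (g' θ) θ := by
      intro θ
      have hc : HasDerivAt (fun t : ℝ => (r * Real.cos t, r * Real.sin t))
          (r * -Real.sin θ, r * Real.cos θ) θ :=
        ((Real.hasDerivAt_cos θ).const_mul r).prodMk ((Real.hasDerivAt_sin θ).const_mul r)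
      have hL := L2map.hasFDerivAt.comp_hasDerivAt θ hc
      exact ((hψ_smooth.differentiable (by simp)).differentiableAt.hasFDerivAt.comp_hasDerivAt θ hL)
    have hin : Continuous (fun t : ℝ => (r * Real.cos t, r * Real.sin t)) :=
      (continuous_const.mul Real.continuous_cos).prodMk (continuous_const.mul Real.continuous_sin)
    have hin2 : Continuous (fun t : ℝ => (r * -Real.sin t, r * Real.cos t)) :=
      (continuous_const.mul Real.continuous_sin.neg).prodMk (continuous_const.mul Real.continuous_cos)
    have hgc : Continuous g := hψcont.comp (L2map.continuous.comp hin)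
    have hg'c : Continuous g' :=
      ((hDcont.comp (L2map.continuous.comp hin)).clm_apply (L2map.continuous.comp hin2))
    have hperg : Function.Periodic g (2*π) := by
      intro t
      simp only [hgdef, Real.cos_add_two_pi, Real.sin_add_two_pi]
    have hperg' : Function.Periodic g' (2*π) := by
      intro t
      simp only [hg'def, Real.cos_add_two_pi, Real.sin_add_two_pi]
    have hm : ∀ m : ℤ, |m| < (ℓ₀:ℤ) →
        (∫ θ in (0:ℝ)..(2*π), g θ * Complex.exp (-Complex.I * m * θ)) = 0 := by
      intro m hm'
      have h0 := hmodes r hr m hm'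
      rw [← h0]
      apply intervalIntegral.integral_congr
      intro x _
      simp only [hgdef, L2map_apply]
    have hcirc := circle_poincare ℓ₀ hℓ₀ hgc hg'c hder hperg hperg' hm
    have hsq_per : Function.Periodic (fun θ => ‖g θ‖^2) (2*π) := by
      intro t; simp only [hperg t]
    have hsq_per' : Function.Periodic (fun θ => ‖g' θ‖^2) (2*π) := by
      intro t; simp only [hperg' t]
    have hpilt : (-π : ℝ) ≤ π := by linarith [Real.pi_pos]
    have e1 : ∫ θ in Ioo (-π) π, ‖g θ‖^2 = ∫ θ in (0:ℝ)..(2*π), ‖g θ‖^2 := by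
      rw [← integral_Ioc_eq_integral_Ioo, ← intervalIntegral.integral_of_le hpilt]
      have h2 := hsq_per.intervalIntegral_add_eq (-π) 0
      rw [show -π + 2*π = π by ring, show (0:ℝ) + 2*π = 2*π by ring] at h2
      exact h2
    have e2 : ∫ θ in Ioo (-π) π, ‖g' θ‖^2 = ∫ θ in (0:ℝ)..(2*π), ‖g' θ‖^2 := by
      rw [← integral_Ioc_eq_integral_Ioo, ← intervalIntegral.integral_of_le hpilt]
      have h2 := hsq_per'.intervalIntegral_add_eq (-π) 0
      rw [show -π + 2*π = π by ring, show (0:ℝ) + 2*π = 2*π by ring] at h2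
      exact h2
    have hG1r : ∫ θ in Ioo (-π) π, G₁ (r, θ) = (∫ θ in Ioo (-π) π, ‖g θ‖^2) / r := by
      rw [← MeasureTheory.integral_div]
    have hG3r : ∫ θ in Ioo (-π) π, G₃ (r, θ) = (∫ θ in Ioo (-π) π, ‖g' θ‖^2) / r := by
      rw [← MeasureTheory.integral_div]
    rw [hG1r, hG3r, e1, e2, mul_div_assoc']
    gcongr
  -- assemble
  have hf1 := fubini_T hi1
  have hf3 := fubini_T hi3
  have hmono : ∫ r in Ioi (0:ℝ), (ℓ₀:ℝ)^2 * ∫ θ in Ioo (-π) π, G₁ (r, θ)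
      ≤ ∫ r in Ioi (0:ℝ), ∫ θ in Ioo (-π) π, G₃ (r, θ) := by
    apply setIntegral_mono_on
    · exact (fubini_int hi1).const_mul _
    · exact fubini_int hi3
    · exact measurableSet_Ioi
    · exact hper_r
  rw [hLHS, hRHS]
  have hconst : ∫ r in Ioi (0:ℝ), (ℓ₀:ℝ)^2 * ∫ θ in Ioo (-π) π, G₁ (r, θ)
      = (ℓ₀:ℝ)^2 * ∫ r in Ioi (0:ℝ), ∫ θ in Ioo (-π) π, G₁ (r, θ) :=
    MeasureTheory.integral_const_mul _ _
  rw [hf1] at *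
  linarith [hmono, hstep1, hconst, hf3]

end
end

section
/- Let a ≥ 0, α := 1/2 - √(1/4 + a) (so α ≤ 0), and let n ≥ 0 be an integer. Define the polynomial P_n(s) := Σ_{i=0}^n ((-n)_i / ((3/2 - α)_i)) s^i / i!, where (s)_i = s(s+1)⋯(s+i-1) denotes the Pochhammer symbol with (s)_0 = 1. Then there exists γ ∈ ℝ such that the function u : ℝ × (ℝ³ \ {0}) → ℂ given by u(t, x) := (1 + t²)^{-3/4 + α/2} |x|^{-α} e^{-|x|²/(4(1+t²))} e^{i |x|² t/(4(1+t²))} e^{-iγ arctan t} P_n(|x|²/(2(1+t²))) satisfies the Schrödinger equation with inverse-square potential i ∂_t u(t,x) = -Δu(t,x) + (a/|x|²) u(t,x) for all t ∈ ℝ and x ≠ 0, with initial datum u(0, x) = |x|^{-α} e^{-|x|²/4} P_n(|x|²/2). -/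
open Real MeasureTheory

/-- `α = 1/2 - √(1/4 + a)` (so `α ≤ 0` when `a ≥ 0`). -/
noncomputable def invSqAlpha (a : ℝ) : ℝ := 1 / 2 - Real.sqrt (1 / 4 + a)

/-- The polynomial `P_n(s) = Σ_{i=0}^n ((-n)_i / ((3/2 - α)_i)) s^i / i!`, where
`(s)_i` is the Pochhammer (rising factorial) symbol. -/
noncomputable def invSqPoly (a : ℝ) (n : ℕ) (s : ℝ) : ℝ :=
  ∑ i ∈ Finset.range (n + 1),
    ((ascPochhammer ℝ i).eval (-(n : ℝ)) / (ascPochhammer ℝ i).eval (3 / 2 - invSqAlpha a))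
      * s ^ i / (Nat.factorial i : ℝ)

/-- The explicit function
`u(t,x) = (1+t²)^{-3/4+α/2} |x|^{-α} e^{-|x|²/(4(1+t²))} e^{i|x|²t/(4(1+t²))}
e^{-iγ arctan t} P_n(|x|²/(2(1+t²)))` on `ℝ × (ℝ³ \ {0})`. -/
noncomputable def invSqSolution (a : ℝ) (n : ℕ) (γ : ℝ) (t : ℝ)
    (x : EuclideanSpace ℝ (Fin 3)) : ℂ :=
  (((1 + t ^ 2) ^ (-(3 : ℝ) / 4 + invSqAlpha a / 2) : ℝ) : ℂ)
    * ((‖x‖ ^ (-(invSqAlpha a)) : ℝ) : ℂ)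
    * ((Real.exp (-‖x‖ ^ 2 / (4 * (1 + t ^ 2))) : ℝ) : ℂ)
    * Complex.exp (Complex.I * ((‖x‖ ^ 2 * t / (4 * (1 + t ^ 2)) : ℝ) : ℂ))
    * Complex.exp (-Complex.I * (γ : ℂ) * ((Real.arctan t : ℝ) : ℂ))
    * ((invSqPoly a n (‖x‖ ^ 2 / (2 * (1 + t ^ 2))) : ℝ) : ℂ)

/-!
Write `q = |x|²`, `σ = 1 + t²`, `b = 3/2 - α` and `s = q/(2σ)`. For `x ≠ 0`,
`u = e^Φ P_n(s)` with `Φ = (α/2 - 3/4) log σ - (α/2) log q + (it - 1) q/(4σ) - iγ arctan t`, and a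
radial function satisfies `Δ g(|x|²) = 4q g'' + 6g'`. Substituting, `i∂_t u + Δu - (a/q) u` is
`(2/σ) e^Φ (s P_n'' + (b - s) P_n' + n P_n)`, provided `α² - α = a` (so that the factor
`q^{-α/2}` absorbs the potential) and `γ = 2n + b`. This vanishes because `P_n = ₁F₁(-n; b; ·)`
solves Kummer's equation.
-/

open Polynomial

section Kummer

variable {K : Type*} [Field K]

noncomputable def kummerCoeff (b : K) (n k : ℕ) : K :=
  (ascPochhammer K k).eval (-(n : K)) / ((ascPochhammer K k).eval b * k.factorial)

/-- The terminating confluent hypergeometric series `₁F₁(-n; b; X)`. -/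
noncomputable def kummerPoly (b : K) (n : ℕ) : K[X] :=
  ∑ k ∈ Finset.range (n + 1), C (kummerCoeff b n k) * X ^ k

lemma kummerCoeff_eq_zero_of_lt (b : K) {n k : ℕ} (h : n < k) : kummerCoeff b n k = 0 := by
  simp [kummerCoeff, ascPochhammer_eval_neg_coe_nat_of_lt h]

lemma coeff_kummerPoly (b : K) (n k : ℕ) : (kummerPoly b n).coeff k = kummerCoeff b n k := by
  simp only [kummerPoly, finsetSum_coeff, coeff_C_mul, coeff_X_pow, mul_ite, mul_one, mul_zero,
    Finset.sum_ite_eq, Finset.mem_range]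
  split_ifs with h
  · rfl
  · exact (kummerCoeff_eq_zero_of_lt b (by omega)).symm

lemma kummerCoeff_succ [CharZero K] {b : K} (hb : ∀ k : ℕ, b + k ≠ 0) (n k : ℕ) :
    (k + 1) * (b + k) * kummerCoeff b n (k + 1) = (k - n) * kummerCoeff b n k := by
  have hpoch : (ascPochhammer K k).eval b ≠ 0 := by
    simp only [ne_eq, ascPochhammer_eval_eq_zero_iff, not_exists, not_and]
    intro j _ hj
    exact hb j (by rw [hj]; ring)
  have := hb k
  rw [kummerCoeff, kummerCoeff, ascPochhammer_succ_eval, ascPochhammer_succ_eval,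
    Nat.factorial_succ]
  push_cast
  field_simp
  ring

lemma kummerPoly_ode [CharZero K] {b : K} (hb : ∀ k : ℕ, b + k ≠ 0) (n : ℕ) :
    X * derivative (derivative (kummerPoly b n)) + (C b - X) * derivative (kummerPoly b n)
      + C (n : K) * kummerPoly b n = 0 := by
  ext (_ | k) <;>
    simp only [coeff_add, sub_mul, coeff_sub, coeff_C_mul, coeff_zero, coeff_X_mul_zero,
      coeff_X_mul, coeff_derivative, coeff_kummerPoly] <;> push_cast
  · linear_combination kummerCoeff_succ hb n 0
  · have := kummerCoeff_succ hb n (k + 1)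
    push_cast at this
    linear_combination this

end Kummer

lemma invSqPoly_eq_eval_kummerPoly (a : ℝ) (n : ℕ) (s : ℝ) :
    invSqPoly a n s = (kummerPoly (3 / 2 - invSqAlpha a) n).eval s := by
  simp only [invSqPoly, kummerPoly, eval_finsetSum, eval_mul, eval_C, eval_pow, eval_X,
    kummerCoeff]
  refine Finset.sum_congr rfl fun i _ => ?_
  ring

section RadialLaplacian

variable {ι : Type*} [Fintype ι] [DecidableEq ι]

lemma fderiv_comp_norm_sq_single {g : ℝ → ℂ} {g' : ℂ} {y : EuclideanSpace ℝ ι}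
    (h : HasDerivAt g g' (‖y‖ ^ 2)) (k : ι) :
    fderiv ℝ (fun z : EuclideanSpace ℝ ι => g (‖z‖ ^ 2)) y (EuclideanSpace.single k 1)
      = ((2 * y k : ℝ) : ℂ) * g' := by
  have hd : HasFDerivAt (fun z : EuclideanSpace ℝ ι => g (‖z‖ ^ 2)) _ y :=
    h.hasFDerivAt.comp y (hasStrictFDerivAt_norm_sq y).hasFDerivAt
  rw [hd.fderiv]
  simp only [ContinuousLinearMap.comp_smul, smul_apply, ContinuousLinearMap.comp_apply,
    coe_innerSL_apply, EuclideanSpace.inner_single_right, ringHom_apply, one_mul,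
    ContinuousLinearMap.toSpanSingleton_apply, Complex.real_smul, nsmul_eq_mul, Nat.cast_ofNat,
    Complex.ofReal_mul, Complex.ofReal_ofNat]
  ring

lemma sum_fderiv_fderiv_comp_norm_sq {g g₁ g₂ : ℝ → ℂ}
    (h₁ : ∀ q > 0, HasDerivAt g (g₁ q) q) (h₂ : ∀ q > 0, HasDerivAt g₁ (g₂ q) q)
    {x : EuclideanSpace ℝ ι} (hx : x ≠ 0) :
    ∑ k : ι, fderiv ℝ (fun y => fderiv ℝ (fun z : EuclideanSpace ℝ ι => g (‖z‖ ^ 2)) y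
        (EuclideanSpace.single k 1)) x (EuclideanSpace.single k 1)
      = ((4 * ‖x‖ ^ 2 : ℝ) : ℂ) * g₂ (‖x‖ ^ 2) + 2 * Fintype.card ι * g₁ (‖x‖ ^ 2) := by
  have hpos : ∀ y : EuclideanSpace ℝ ι, y ≠ 0 → 0 < ‖y‖ ^ 2 := fun y hy => by positivity
  have hsecond : ∀ k : ι,
      fderiv ℝ (fun y => fderiv ℝ (fun z : EuclideanSpace ℝ ι => g (‖z‖ ^ 2)) y
        (EuclideanSpace.single k 1)) x (EuclideanSpace.single k 1)
        = ((4 * x k ^ 2 : ℝ) : ℂ) * g₂ (‖x‖ ^ 2) + 2 * g₁ (‖x‖ ^ 2) := by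
    intro k
    have hfirst : (fun y => fderiv ℝ (fun z : EuclideanSpace ℝ ι => g (‖z‖ ^ 2)) y
          (EuclideanSpace.single k 1))
        =ᶠ[nhds x] fun y => ((2 * y k : ℝ) : ℂ) * g₁ (‖y‖ ^ 2) := by
      filter_upwards [isOpen_compl_singleton.mem_nhds hx] with y hy
      exact fderiv_comp_norm_sq_single (h₁ _ (hpos y hy)) k
    have hcoord : HasFDerivAt (fun y : EuclideanSpace ℝ ι => ((2 * y k : ℝ) : ℂ))
        (Complex.ofRealCLM.comp ((2 : ℝ) • EuclideanSpace.proj k)) x :=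
      Complex.ofRealCLM.hasFDerivAt.comp x
        ((EuclideanSpace.proj k : EuclideanSpace ℝ ι →L[ℝ] ℝ).hasFDerivAt.const_smul (2 : ℝ))
    have hg₁ : HasFDerivAt (fun y : EuclideanSpace ℝ ι => g₁ (‖y‖ ^ 2)) _ x :=
      (h₂ _ (hpos x hx)).hasFDerivAt.comp x (hasStrictFDerivAt_norm_sq x).hasFDerivAt
    rw [hfirst.fderiv_eq, (hcoord.fun_mul hg₁).fderiv]
    simp only [Complex.ofReal_mul, Complex.ofReal_ofNat, ContinuousLinearMap.comp_smul,
      ContinuousLinearMap.comp_smulₛₗ, ringHom_apply, add_apply, smul_apply,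
      ContinuousLinearMap.comp_apply, coe_innerSL_apply, EuclideanSpace.inner_single_right,
      one_mul, ContinuousLinearMap.toSpanSingleton_apply, Complex.real_smul, nsmul_eq_mul,
      Nat.cast_ofNat, smul_eq_mul, PiLp.proj_apply, PiLp.single_eq_same, Complex.ofRealCLM_apply,
      Complex.ofReal_one, mul_one, Complex.ofReal_pow]
    ring
  simp only [hsecond, Finset.sum_add_distrib, ← Finset.sum_mul, ← Complex.ofReal_sum,
    ← Finset.mul_sum, ← EuclideanSpace.real_norm_sq_eq, Finset.sum_const, Finset.card_univ,
    nsmul_eq_mul]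
  ring

end RadialLaplacian

lemma HasDerivAt.cexp_mul {𝕜 : Type*} [NontriviallyNormedField 𝕜] [NormedAlgebra 𝕜 ℂ]
    {Φ R : 𝕜 → ℂ} {Φ' R' : ℂ} {r : 𝕜} (hΦ : HasDerivAt Φ Φ' r) (hR : HasDerivAt R R' r) :
    HasDerivAt (fun r => Complex.exp (Φ r) * R r) (Complex.exp (Φ r) * (Φ' * R r + R')) r :=
  (hΦ.cexp.mul hR).congr_deriv (by ring)

section Profile

variable (α γ : ℝ) (n : ℕ)

noncomputable def invSqProfile (t q : ℝ) : ℂ :=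
  (((1 + t ^ 2) ^ (-(3 : ℝ) / 4 + α / 2) : ℝ) : ℂ) * ((q ^ (-α / 2) : ℝ) : ℂ)
    * ((Real.exp (-q / (4 * (1 + t ^ 2))) : ℝ) : ℂ)
    * Complex.exp (Complex.I * ((q * t / (4 * (1 + t ^ 2)) : ℝ) : ℂ))
    * Complex.exp (-Complex.I * (γ : ℂ) * ((Real.arctan t : ℝ) : ℂ))
    * (((kummerPoly (3 / 2 - α) n).eval (q / (2 * (1 + t ^ 2))) : ℝ) : ℂ)

noncomputable def invSqPhase (t q : ℝ) : ℂ :=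
  (((-(3 : ℝ) / 4 + α / 2) * Real.log (1 + t ^ 2) - α / 2 * Real.log q : ℝ) : ℂ)
    + (Complex.I * t - 1) / (4 * (1 + t ^ 2)) * q - Complex.I * γ * (Real.arctan t : ℂ)

noncomputable def invSqPolyDeriv (k : ℕ) (t q : ℝ) : ℂ :=
  ((derivative^[k] (kummerPoly (3 / 2 - α) n)).eval (q / (2 * (1 + t ^ 2))) : ℝ)

lemma invSqProfile_eq_exp_mul (t : ℝ) {q : ℝ} (hq : 0 < q) :
    invSqProfile α γ n t q = Complex.exp (invSqPhase α γ t q) * invSqPolyDeriv α n 0 t q := by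
  have hσ : (0 : ℝ) < 1 + t ^ 2 := by positivity
  rw [invSqProfile, rpow_def_of_pos hσ, rpow_def_of_pos hq]
  simp only [Complex.ofReal_exp, ← Complex.exp_add]
  congr 2
  rw [invSqPhase]
  push_cast
  ring

noncomputable def invSqPhaseDerivQ (t q : ℝ) : ℂ :=
  (Complex.I * t - 1) / (4 * (1 + t ^ 2)) - α / (2 * q)

noncomputable def invSqPhaseDerivT (t q : ℝ) : ℂ :=
  (-(3 : ℂ) / 2 + α) * t / (1 + t ^ 2)
    + (Complex.I * (1 - t ^ 2) + 2 * t) * q / (4 * (1 + t ^ 2) ^ 2) - Complex.I * γ / (1 + t ^ 2)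

lemma hasDerivAt_invSqPolyDeriv_q (k : ℕ) (t q : ℝ) :
    HasDerivAt (fun q => invSqPolyDeriv α n k t q)
      (invSqPolyDeriv α n (k + 1) t q / (2 * (1 + t ^ 2))) q := by
  have hs := (hasDerivAt_id q).div_const (2 * (1 + t ^ 2))
  refine (((derivative^[k] (kummerPoly (3 / 2 - α) n)).hasDerivAt _).comp q
    hs).ofReal_comp.congr_deriv ?_
  simp only [invSqPolyDeriv, Function.iterate_succ_apply', id]
  push_cast
  ring

lemma hasDerivAt_invSqPolyDeriv_t (k : ℕ) (t q : ℝ) :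
    HasDerivAt (fun t => invSqPolyDeriv α n k t q)
      (-(q * t / (1 + t ^ 2) ^ 2) * invSqPolyDeriv α n (k + 1) t q) t := by
  have hs : HasDerivAt (fun t : ℝ => q / (2 * (1 + t ^ 2))) (-(q * t / (1 + t ^ 2) ^ 2)) t := by
    refine ((hasDerivAt_const t q).div (((hasDerivAt_pow 2 t).const_add 1).const_mul 2)
      (by positivity)).congr_deriv ?_
    field_simp
    ring
  refine (((derivative^[k] (kummerPoly (3 / 2 - α) n)).hasDerivAt _).comp t
    hs).ofReal_comp.congr_deriv ?_
  simp only [invSqPolyDeriv, Function.iterate_succ_apply']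
  push_cast
  ring

lemma hasDerivAt_invSqPhase_q (t : ℝ) {q : ℝ} (hq : 0 < q) :
    HasDerivAt (fun q => invSqPhase α γ t q) (invSqPhaseDerivQ α t q) q := by
  have hlog := (((Real.hasDerivAt_log hq.ne').const_mul (α / 2)).const_sub
    ((-(3 : ℝ) / 4 + α / 2) * Real.log (1 + t ^ 2))).ofReal_comp
  have hlin := (hasDerivAt_id q).ofReal_comp.const_mul ((Complex.I * t - 1) / (4 * (1 + t ^ 2)))
  refine ((hlog.add hlin).sub_const (Complex.I * γ * (Real.arctan t : ℂ))).congr_deriv ?_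
  simp only [invSqPhaseDerivQ]
  push_cast
  ring

lemma hasDerivAt_invSqPhase_t (t q : ℝ) :
    HasDerivAt (fun t => invSqPhase α γ t q) (invSqPhaseDerivT α γ t q) t := by
  have hσ : HasDerivAt (fun t : ℝ => 1 + t ^ 2) (2 * t) t := by
    simpa using (hasDerivAt_pow 2 t).const_add 1
  have hσC : HasDerivAt (fun t : ℝ => 1 + (t : ℂ) ^ 2) (2 * (t : ℂ)) t := by
    simpa using ((hasDerivAt_pow 2 (t : ℂ)).comp_ofReal).const_add 1
  have hσ0 : (1 + (t : ℂ) ^ 2) ≠ 0 := by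
    exact_mod_cast (show (0 : ℝ) < 1 + t ^ 2 by positivity).ne'
  have hlog := ((((Real.hasDerivAt_log (by positivity)).comp t hσ).const_mul
    (-(3 : ℝ) / 4 + α / 2)).sub_const (α / 2 * Real.log q)).ofReal_comp
  have hw := ((((hasDerivAt_id t).ofReal_comp.const_mul Complex.I).sub_const 1).div
    (hσC.const_mul 4) (mul_ne_zero (by norm_num) hσ0)).mul_const (q : ℂ)
  have harctan := ((Real.hasDerivAt_arctan t).ofReal_comp).const_mul (Complex.I * γ)
  refine ((hlog.add hw).sub harctan).congr_deriv ?_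
  simp only [invSqPhaseDerivT, id]
  push_cast
  field_simp
  ring

noncomputable def invSqProfileDerivQ (t q : ℝ) : ℂ :=
  Complex.exp (invSqPhase α γ t q) * (invSqPhaseDerivQ α t q * invSqPolyDeriv α n 0 t q
    + invSqPolyDeriv α n 1 t q / (2 * (1 + t ^ 2)))

noncomputable def invSqProfileDerivQQ (t q : ℝ) : ℂ :=
  Complex.exp (invSqPhase α γ t q) * (invSqPhaseDerivQ α t q * (invSqPhaseDerivQ α t q
      * invSqPolyDeriv α n 0 t q + invSqPolyDeriv α n 1 t q / (2 * (1 + t ^ 2)))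
    + (α / (2 * q ^ 2) * invSqPolyDeriv α n 0 t q
      + invSqPhaseDerivQ α t q * (invSqPolyDeriv α n 1 t q / (2 * (1 + t ^ 2)))
      + invSqPolyDeriv α n 2 t q / (2 * (1 + t ^ 2)) / (2 * (1 + t ^ 2))))

noncomputable def invSqProfileDerivT (t q : ℝ) : ℂ :=
  Complex.exp (invSqPhase α γ t q) * (invSqPhaseDerivT α γ t q * invSqPolyDeriv α n 0 t q
    + -(q * t / (1 + t ^ 2) ^ 2) * invSqPolyDeriv α n 1 t q)

lemma hasDerivAt_invSqProfile_q (t : ℝ) {q : ℝ} (hq : 0 < q) :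
    HasDerivAt (invSqProfile α γ n t) (invSqProfileDerivQ α γ n t q) q := by
  refine ((hasDerivAt_invSqPhase_q α γ t hq).cexp_mul
    (hasDerivAt_invSqPolyDeriv_q α n 0 t q)).congr_of_eventuallyEq ?_
  filter_upwards [Ioi_mem_nhds hq] with r hr using invSqProfile_eq_exp_mul α γ n t hr

lemma hasDerivAt_invSqProfileDerivQ (t : ℝ) {q : ℝ} (hq : 0 < q) :
    HasDerivAt (invSqProfileDerivQ α γ n t) (invSqProfileDerivQQ α γ n t q) q := by
  have hq' : (q : ℂ) ≠ 0 := by exact_mod_cast hq.ne'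
  have hφ : HasDerivAt (fun q => invSqPhaseDerivQ α t q) (α / (2 * q ^ 2)) q := by
    refine (((hasDerivAt_const q (α : ℂ)).div ((hasDerivAt_id q).ofReal_comp.const_mul 2)
      (by simpa using hq')).const_sub _).congr_deriv ?_
    simp only [id, Complex.ofReal_one]
    field_simp
    ring
  have hR := (hφ.mul (hasDerivAt_invSqPolyDeriv_q α n 0 t q)).add
    ((hasDerivAt_invSqPolyDeriv_q α n 1 t q).div_const (2 * (1 + t ^ 2)))
  exact ((hasDerivAt_invSqPhase_q α γ t hq).cexp_mul hR).congr_deriv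
    (by simp only [invSqProfileDerivQQ, Pi.add_apply, Pi.mul_apply])

lemma hasDerivAt_invSqProfile_t (t : ℝ) {q : ℝ} (hq : 0 < q) :
    HasDerivAt (fun t => invSqProfile α γ n t q) (invSqProfileDerivT α γ n t q) t := by
  simp only [invSqProfile_eq_exp_mul α γ n _ hq]
  exact (hasDerivAt_invSqPhase_t α γ t q).cexp_mul (hasDerivAt_invSqPolyDeriv_t α n 0 t q)

end Profile

lemma invSqSolution_eq_invSqProfile (a : ℝ) (n : ℕ) (γ t : ℝ) (x : EuclideanSpace ℝ (Fin 3)) :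
    invSqSolution a n γ t x = invSqProfile (invSqAlpha a) γ n t (‖x‖ ^ 2) := by
  have hpow : ‖x‖ ^ (-invSqAlpha a) = (‖x‖ ^ 2) ^ (-invSqAlpha a / 2) := by
    rw [← rpow_natCast, ← rpow_mul (norm_nonneg x)]
    ring_nf
  rw [invSqSolution, invSqProfile, invSqPoly_eq_eval_kummerPoly, hpow]

lemma invSqProfile_schrodinger (α : ℝ) (n : ℕ) (hb : ∀ k : ℕ, 3 / 2 - α + k ≠ 0) (t : ℝ) {q : ℝ}
    (hq : 0 < q) :
    Complex.I * invSqProfileDerivT α (2 * n + 3 / 2 - α) n t q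
      = -(4 * q * invSqProfileDerivQQ α (2 * n + 3 / 2 - α) n t q
          + 6 * invSqProfileDerivQ α (2 * n + 3 / 2 - α) n t q)
        + (α ^ 2 - α) / q * invSqProfile α (2 * n + 3 / 2 - α) n t q := by
  have hq' : (q : ℂ) ≠ 0 := by exact_mod_cast hq.ne'
  have hσ : (1 + (t : ℂ) ^ 2) ≠ 0 := by
    exact_mod_cast (show (0 : ℝ) < 1 + t ^ 2 by positivity).ne'
  have hode : q / (2 * (1 + t ^ 2)) * invSqPolyDeriv α n 2 t q
      + (3 / 2 - α - q / (2 * (1 + t ^ 2))) * invSqPolyDeriv α n 1 t q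
      + n * invSqPolyDeriv α n 0 t q = 0 := by
    have := congrArg (fun p => ((p.eval (q / (2 * (1 + t ^ 2))) : ℝ) : ℂ)) (kummerPoly_ode hb n)
    simp only [eval_add, eval_mul, eval_sub, eval_X, eval_C, eval_zero] at this
    push_cast at this
    simpa [invSqPolyDeriv] using this
  rw [invSqProfile_eq_exp_mul _ _ _ _ hq]
  simp only [invSqProfileDerivT, invSqProfileDerivQQ, invSqProfileDerivQ, invSqPhaseDerivT,
    invSqPhaseDerivQ]
  generalize invSqPolyDeriv α n 0 t q = P₀ at *
  generalize invSqPolyDeriv α n 1 t q = P₁ at *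
  generalize invSqPolyDeriv α n 2 t q = P₂ at *
  generalize Complex.exp (invSqPhase α (2 * n + 3 / 2 - α) t q) = E
  push_cast
  linear_combination (norm := skip) (2 / (1 + t ^ 2) * E) * hode
  field_simp
  ring_nf
  simp only [Complex.I_sq]
  ring

lemma invSqAlpha_le_half (a : ℝ) : invSqAlpha a ≤ 1 / 2 := by
  have := Real.sqrt_nonneg (1 / 4 + a)
  rw [invSqAlpha]
  linarith

lemma invSqAlpha_sq_sub {a : ℝ} (ha : -(1 / 4) ≤ a) : invSqAlpha a ^ 2 - invSqAlpha a = a := by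
  have := Real.sq_sqrt (show 0 ≤ 1 / 4 + a by linarith)
  rw [invSqAlpha]
  linear_combination this

/-- **Explicit solutions of the Schrödinger equation with inverse-square potential**
(formula (28) of the paper). Let `a ≥ 0`, `α = 1/2 - √(1/4+a)`, `n ∈ ℕ`. Then there is
`γ ∈ ℝ` such that `u = invSqSolution a n γ` satisfies
`i ∂_t u(t,x) = -Δu(t,x) + (a/|x|²) u(t,x)` for all `t ∈ ℝ`, `x ≠ 0`, with initial
datum `u(0,x) = |x|^{-α} e^{-|x|²/4} P_n(|x|²/2)`. -/
theorem invSq_explicit_evolution (a : ℝ) (ha : 0 ≤ a) (n : ℕ) :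
    ∃ γ : ℝ, ∀ (t : ℝ) (x : EuclideanSpace ℝ (Fin 3)), x ≠ 0 →
      (Complex.I * deriv (fun s => invSqSolution a n γ s x) t
        = -(∑ k : Fin 3,
              fderiv ℝ (fun y =>
                  fderiv ℝ (fun z => invSqSolution a n γ t z) y
                    (EuclideanSpace.single k 1))
                x (EuclideanSpace.single k 1))
          + ((a / ‖x‖ ^ 2 : ℝ) : ℂ) * invSqSolution a n γ t x)
      ∧ invSqSolution a n γ 0 x
          = ((‖x‖ ^ (-(invSqAlpha a)) * Real.exp (-‖x‖ ^ 2 / 4)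
              * invSqPoly a n (‖x‖ ^ 2 / 2) : ℝ) : ℂ) := by
  have hb (k : ℕ) : 3 / 2 - invSqAlpha a + k ≠ 0 := by
    linarith [invSqAlpha_le_half a, k.cast_nonneg (α := ℝ)]
  have hpot : ((invSqAlpha a : ℂ) ^ 2 - invSqAlpha a) = a := by
    exact_mod_cast invSqAlpha_sq_sub (by linarith)
  refine ⟨2 * n + 3 / 2 - invSqAlpha a, fun t x hx => ⟨?_, by simp [invSqSolution]⟩⟩
  have hq : 0 < ‖x‖ ^ 2 := by positivity
  simp only [invSqSolution_eq_invSqProfile]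
  rw [(hasDerivAt_invSqProfile_t _ _ n t hq).deriv,
    sum_fderiv_fderiv_comp_norm_sq (fun q hq => hasDerivAt_invSqProfile_q _ _ n t hq)
      (fun q hq => hasDerivAt_invSqProfileDerivQ _ _ n t hq) hx,
    invSqProfile_schrodinger _ n hb t hq, hpot]
  push_cast
  norm_num
end
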